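/- arXiv:1312.1278 — 8 statements merged into one kernel-verified Lean document; each statement's English description precedes it below -/
import Mathlib

section
/- Suppose G is connected. A nonzero class x ∈ Λ(G) is irreducible if and only if there exists a subset R ⊆ V with R ≠ ∅ and R ≠ V such that x equals the class of the indicator function [R] and both the induced multigraph on R and the induced multigraph on V∖R are connected. -/
open Finset

/-- The subgroup of constant functions in `V → ℤ`. -/
def constSub (V : Type) [Fintype V] : AddSubgroup (V → ℤ) where
  carrier := {f | ∃ c : ℤ, ∀ v, f v = c}
  zero_mem' := ⟨0, fun _ => rfl⟩
  add_mem' := by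
    rintro f g ⟨c, hc⟩ ⟨d, hd⟩
    exact ⟨c + d, fun v => by simp [hc v, hd v]⟩
  neg_mem' := by
    rintro f ⟨c, hc⟩
    exact ⟨-c, fun v => by simp [hc v]⟩

/-- The graph lattice `Λ(G)`: functions `V → ℤ` modulo constants. -/
abbrev GrLat (V : Type) [Fintype V] := (V → ℤ) ⧸ constSub V

/-- The pairing `B(b,c) = (1/2) ∑_{u,v ∈ V} (b v - b u)(c v - c u) e(u,v)`. -/
def Bq {V : Type} [Fintype V] (e : V → V → ℕ) (b c : V → ℤ) : ℚ :=
  (1 / 2 : ℚ) * ∑ u : V, ∑ v : V,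
    ((b v - b u : ℤ) : ℚ) * ((c v - c u : ℤ) : ℚ) * (e u v : ℚ)

lemma Bq_well {V : Type} [Fintype V] (e : V → V → ℕ)
    (a₁ b₁ a₂ b₂ : V → ℤ)
    (h₁ : @Setoid.r _ (QuotientAddGroup.leftRel (constSub V)) a₁ a₂)
    (h₂ : @Setoid.r _ (QuotientAddGroup.leftRel (constSub V)) b₁ b₂) :
    Bq e a₁ b₁ = Bq e a₂ b₂ := by
  rw [QuotientAddGroup.leftRel_apply] at h₁ h₂
  obtain ⟨c, hc⟩ := h₁
  obtain ⟨d, hd⟩ := h₂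
  unfold Bq
  congr 1
  refine Finset.sum_congr rfl fun u _ => Finset.sum_congr rfl fun v _ => ?_
  have h1 : a₂ v - a₂ u = a₁ v - a₁ u := by
    have hu := hc u; have hv := hc v
    simp only [Pi.add_apply, Pi.neg_apply] at hu hv
    omega
  have h2 : b₂ v - b₂ u = b₁ v - b₁ u := by
    have hu := hd u; have hv := hd v
    simp only [Pi.add_apply, Pi.neg_apply] at hu hv
    omega
  rw [h1, h2]

/-- The pairing `B` descended to the graph lattice. -/
def BL {V : Type} [Fintype V] (e : V → V → ℕ) (x y : GrLat V) : ℚ :=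
  Quotient.liftOn₂ x y (Bq e) (Bq_well e)

/-- Indicator function of a subset `R ⊆ V`. -/
def ind {V : Type} [Fintype V] [DecidableEq V] (R : Finset V) : V → ℤ :=
  fun v => if v ∈ R then 1 else 0

/-- The class of the indicator function `[R]` in the graph lattice. -/
def cls {V : Type} [Fintype V] [DecidableEq V] (R : Finset V) : GrLat V :=
  QuotientAddGroup.mk (ind R)

/-- A class `x ∈ Λ(G)` is irreducible if it cannot be written `x = y + z`
with `y, z` nonzero and `B(y,z) ≥ 0`. -/
def IrredGL {V : Type} [Fintype V] (e : V → V → ℕ) (x : GrLat V) : Prop :=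
  ¬ ∃ y z : GrLat V, y ≠ 0 ∧ z ≠ 0 ∧ x = y + z ∧ 0 ≤ BL e y z

/-- The induced multigraph on a subset `W ⊆ V` is connected. -/
def IndConn {V : Type} [Fintype V] (e : V → V → ℕ) (W : Finset V) : Prop :=
  (SimpleGraph.fromRel fun u v : {x // x ∈ W} => 0 < e u.1 v.1).Connected

/-!
(⇒) Let `R` be the set where a representative `b` of `x` is maximal. On every edge the term of
`B([R], b - [R])` is nonnegative, so irreducibility forces `x = [R]`. If `R` splits into two
parts `S`, `R ∖ S` with no edge between them, then `[R] = [S] + [R ∖ S]` with `B = 0`; the same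
applies to `V ∖ R` because `[V ∖ R] = -[R]`.

(⇐) If `[R] = [b] + [[R] - b]`, the term of `B` on an edge is `n (m - n)` with `n` the jump of `b`
and `|m| ≤ 1` the jump of `[R]`, hence `≤ 0`; so `B ≥ 0` makes every term vanish. Then `b` is
constant on `R` and on `V ∖ R`, and on an edge crossing between them `n ∈ {0, -1}`, i.e. `b` or
`[R] - b` is constant.
-/

section

variable {V : Type} [Fintype V]

theorem mk_eq_zero_iff (f : V → ℤ) :
    (QuotientAddGroup.mk f : GrLat V) = 0 ↔ ∃ c, ∀ v, f v = c :=
  QuotientAddGroup.eq_zero_iff f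

theorem BL_mk (e : V → V → ℕ) (b c : V → ℤ) :
    BL e (QuotientAddGroup.mk b) (QuotientAddGroup.mk c) = Bq e b c :=
  rfl

theorem Bq_eq (e : V → V → ℕ) (b c : V → ℤ) :
    Bq e b c = ((∑ u, ∑ v, (b v - b u) * (c v - c u) * (e u v : ℤ) : ℤ) : ℚ) / 2 := by
  unfold Bq
  push_cast
  ring

theorem Bq_nonneg_of_forall {e : V → V → ℕ} {b c : V → ℤ}
    (h : ∀ u v, 0 < e u v → 0 ≤ (b v - b u) * (c v - c u)) : 0 ≤ Bq e b c := by
  rw [Bq_eq]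
  have hsum : 0 ≤ ∑ u, ∑ v, (b v - b u) * (c v - c u) * (e u v : ℤ) := by
    refine sum_nonneg fun u _ => sum_nonneg fun v _ => ?_
    rcases (e u v).eq_zero_or_pos with he | he
    · simp [he]
    · exact mul_nonneg (h u v he) (Int.natCast_nonneg _)
  positivity

theorem forall_edge_eq_zero_of_Bq_nonneg {e : V → V → ℕ} {b c : V → ℤ}
    (h : ∀ u v, 0 < e u v → (b v - b u) * (c v - c u) ≤ 0) (hB : 0 ≤ Bq e b c) :
    ∀ u v, 0 < e u v → (b v - b u) * (c v - c u) = 0 := by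
  have hterm : ∀ u v, (b v - b u) * (c v - c u) * (e u v : ℤ) ≤ 0 := fun u v => by
    rcases (e u v).eq_zero_or_pos with he | he
    · simp [he]
    · exact mul_nonpos_of_nonpos_of_nonneg (h u v he) (Int.natCast_nonneg _)
  have hinner : ∀ u, ∑ v, (b v - b u) * (c v - c u) * (e u v : ℤ) ≤ 0 :=
    fun u => sum_nonpos fun v _ => hterm u v
  have hsum : ∑ u, ∑ v, (b v - b u) * (c v - c u) * (e u v : ℤ) = 0 := by
    refine le_antisymm (sum_nonpos fun u _ => hinner u) ?_
    rw [Bq_eq, le_div_iff₀ two_pos, zero_mul] at hB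
    exact_mod_cast hB
  intro u v he
  have := (sum_eq_zero_iff_of_nonpos fun v _ => hterm u v).mp
    ((sum_eq_zero_iff_of_nonpos fun u _ => hinner u).mp hsum u (mem_univ u)) v (mem_univ v)
  simpa [he.ne'] using this

theorem BL_neg_neg (e : V → V → ℕ) (y z : GrLat V) : BL e (-y) (-z) = BL e y z := by
  induction y using QuotientAddGroup.induction_on
  induction z using QuotientAddGroup.induction_on
  rw [← QuotientAddGroup.mk_neg, ← QuotientAddGroup.mk_neg, BL_mk, BL_mk]
  simp only [Bq, Pi.neg_apply, Int.cast_sub, neg_sub_neg]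
  congr 1
  refine sum_congr rfl fun u _ => sum_congr rfl fun v _ => ?_
  ring

theorem IrredGL.neg {e : V → V → ℕ} {x : GrLat V} (hx : IrredGL e x) : IrredGL e (-x) := by
  rintro ⟨y, z, hy, hz, hyz, hB⟩
  refine hx ⟨-y, -z, neg_ne_zero.mpr hy, neg_ne_zero.mpr hz, ?_, by rwa [BL_neg_neg]⟩
  rw [← neg_add, ← hyz, neg_neg]

end

section

variable {V : Type} [Fintype V] [DecidableEq V]

theorem cls_eq_zero_iff {R : Finset V} : cls R = 0 ↔ R = ∅ ∨ R = univ := by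
  rw [cls, mk_eq_zero_iff]
  constructor
  · rintro ⟨c, hc⟩
    rcases R.eq_empty_or_nonempty with hR | ⟨u, hu⟩
    · exact .inl hR
    · refine .inr (eq_univ_of_forall fun v => ?_)
      have := (hc v).trans (hc u).symm
      simp only [ind, hu] at this
      split_ifs at this with hv <;> simp_all
  · rintro (rfl | rfl)
    · exact ⟨0, fun v => by simp [ind]⟩
    · exact ⟨1, fun v => by simp [ind]⟩

theorem cls_ne_zero {R : Finset V} (hR : R.Nonempty) (hRu : R ≠ univ) : cls R ≠ 0 := by
  rw [Ne, cls_eq_zero_iff, not_or]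
  exact ⟨hR.ne_empty, hRu⟩

theorem cls_compl (R : Finset V) : cls Rᶜ = -cls R := by
  rw [cls, cls, eq_neg_iff_add_eq_zero, ← QuotientAddGroup.mk_add, mk_eq_zero_iff]
  exact ⟨1, fun v => by by_cases hv : v ∈ R <;> simp [ind, hv]⟩

theorem cls_add_cls_sdiff {S W : Finset V} (h : S ⊆ W) : cls S + cls (W \ S) = cls W := by
  rw [cls, cls, cls, ← QuotientAddGroup.mk_add]
  congr 1
  funext v
  by_cases hv : v ∈ S
  · simp [ind, hv, h hv]
  · simp [ind, hv]

theorem cls_sub_mk (R : Finset V) (b : V → ℤ) :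
    cls R - QuotientAddGroup.mk b = QuotientAddGroup.mk (ind R - b) :=
  (QuotientAddGroup.mk_sub _ _ _).symm

end

section

variable {V : Type} {e : V → V → ℕ}

theorem exists_edge_of_connected (hsymm : ∀ u v, e u v = e v u)
    (hconn : (SimpleGraph.fromRel fun u v => 0 < e u v).Connected) {S : Set V} {u v : V}
    (hu : u ∈ S) (hv : v ∉ S) : ∃ a ∈ S, ∃ b ∉ S, 0 < e a b := by
  obtain ⟨p⟩ := hconn.preconnected u v
  obtain ⟨d, -, hd₁, hd₂⟩ := p.exists_boundary_dart S hu hv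
  obtain ⟨-, he | he⟩ := d.adj
  · exact ⟨_, hd₁, _, hd₂, he⟩
  · exact ⟨_, hd₁, _, hd₂, hsymm _ _ ▸ he⟩

variable [Fintype V]

theorem IndConn.eq_of_forall_edge {α : Type*} {W : Finset V} (hW : IndConn e W) {f : V → α}
    (hf : ∀ u ∈ W, ∀ v ∈ W, 0 < e u v → f u = f v) {u v : V} (hu : u ∈ W) (hv : v ∈ W) :
    f u = f v := by
  by_contra hne
  obtain ⟨p⟩ := hW.preconnected ⟨u, hu⟩ ⟨v, hv⟩
  obtain ⟨d, -, hd₁, hd₂⟩ :=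
    p.exists_boundary_dart {x | f x.1 = f u} rfl (Ne.symm hne)
  obtain ⟨-, he | he⟩ := d.adj
  · exact hd₂ ((hf _ d.fst.2 _ d.snd.2 he).symm.trans hd₁)
  · exact hd₂ ((hf _ d.snd.2 _ d.fst.2 he).trans hd₁)

theorem indConn_of_forall_exists_edge [DecidableEq V] {W : Finset V} (hW : W.Nonempty)
    (h : ∀ S ⊆ W, S.Nonempty → (W \ S).Nonempty → ∃ u ∈ S, ∃ v ∈ W \ S, 0 < e u v) :
    IndConn e W := by
  classical
  obtain ⟨w, hw⟩ := hW
  set G := SimpleGraph.fromRel fun a b : W => 0 < e a.1 b.1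
  rw [IndConn, SimpleGraph.connected_iff_exists_forall_reachable]
  refine ⟨⟨w, hw⟩, fun x => by_contra fun hx => ?_⟩
  set S := W.filter fun v => ∃ hv : v ∈ W, G.Reachable ⟨w, hw⟩ ⟨v, hv⟩
  have hS : ∀ v, v ∈ S ↔ ∃ hv : v ∈ W, G.Reachable ⟨w, hw⟩ ⟨v, hv⟩ := by
    simp [S]
  obtain ⟨u, hu, v, hv, he⟩ := h S (filter_subset _ _) ⟨w, (hS w).2 ⟨hw, .rfl⟩⟩
    ⟨x, mem_sdiff.2 ⟨x.2, fun hxS => hx ((hS x).1 hxS).2⟩⟩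
  obtain ⟨huW, hwu⟩ := (hS u).1 hu
  obtain ⟨hvW, hvS⟩ := mem_sdiff.1 hv
  have huv : (⟨u, huW⟩ : W) ≠ ⟨v, hvW⟩ := fun huv => hvS (Subtype.mk.inj huv ▸ hu)
  exact hvS ((hS v).2 ⟨hvW, hwu.trans (SimpleGraph.Adj.reachable ⟨huv, .inl he⟩)⟩)

end

section

variable {V : Type} [Fintype V] [DecidableEq V] {e : V → V → ℕ}

theorem Bq_ind_ind_nonneg (hsymm : ∀ u v, e u v = e v u) {S T : Finset V}
    (hST : Disjoint S T) (hno : ∀ u ∈ S, ∀ v ∈ T, e u v = 0) :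
    0 ≤ Bq e (ind S) (ind T) := by
  refine Bq_nonneg_of_forall fun u v he => ?_
  have hST' := disjoint_left.mp hST
  have huv : ¬ (u ∈ S ∧ v ∈ T) := fun h => he.ne' (hno u h.1 v h.2)
  have hvu : ¬ (v ∈ S ∧ u ∈ T) := fun h => he.ne' (hsymm u v ▸ hno v h.1 u h.2)
  by_cases hu : u ∈ S <;> by_cases hv : v ∈ S <;> by_cases hu' : u ∈ T <;>
    by_cases hv' : v ∈ T <;> simp_all [ind]

theorem IrredGL.indConn (hsymm : ∀ u v, e u v = e v u) {W : Finset V} (hW : W.Nonempty)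
    (h : IrredGL e (cls W)) : IndConn e W := by
  refine indConn_of_forall_exists_edge hW fun S hSW hS hWS => by_contra fun hno => h ?_
  push Not at hno
  have hSu : S ≠ univ := fun hSu => by
    obtain ⟨v, hv⟩ := hWS
    exact (mem_sdiff.1 hv).2 (hSu ▸ mem_univ v)
  have hWSu : W \ S ≠ univ := fun hWSu => by
    obtain ⟨u, hu⟩ := hS
    exact (mem_sdiff.1 (hWSu ▸ mem_univ u : u ∈ W \ S)).2 hu
  refine ⟨cls S, cls (W \ S), cls_ne_zero hS hSu, cls_ne_zero hWS hWSu,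
    (cls_add_cls_sdiff hSW).symm, ?_⟩
  exact Bq_ind_ind_nonneg hsymm disjoint_sdiff fun u hu v hv => Nat.le_zero.mp (hno u hu v hv)

theorem Bq_ind_sub_nonneg_of_forall_mem_iff {b : V → ℤ} {R : Finset V}
    (hR : ∀ v, v ∈ R ↔ ∀ w, b w ≤ b v) : 0 ≤ Bq e (ind R) (b - ind R) := by
  have hlt : ∀ {u v}, u ∈ R → v ∉ R → b v < b u := fun hu hv => by
    obtain ⟨w, hw⟩ := not_forall.1 (mt (hR _).2 hv)
    exact (lt_of_not_ge hw).trans_le ((hR _).1 hu w)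
  refine Bq_nonneg_of_forall fun u v _ => ?_
  by_cases hu : u ∈ R <;> by_cases hv : v ∈ R <;> simp [ind, hu, hv]
  · linarith [hlt hu hv]
  · linarith [hlt hv hu]

theorem IrredGL.exists_eq_cls [Nonempty V] {x : GrLat V} (hx : IrredGL e x) :
    ∃ R : Finset V, R.Nonempty ∧ x = cls R := by
  obtain ⟨b, rfl⟩ := QuotientAddGroup.mk_surjective x
  set R := univ.filter fun v => ∀ w, b w ≤ b v
  have hR : ∀ v, v ∈ R ↔ ∀ w, b w ≤ b v := by simp [R]
  obtain ⟨v₀, -, hv₀⟩ := exists_max_image univ b univ_nonempty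
  have hR₀ : v₀ ∈ R := (hR v₀).2 fun w => hv₀ w (mem_univ w)
  refine ⟨R, ⟨v₀, hR₀⟩, by_contra fun hne => hx ?_⟩
  have hRu : R ≠ univ := fun hRu => hne <| by
    rw [hRu, cls_eq_zero_iff.2 (.inr rfl), mk_eq_zero_iff]
    exact ⟨b v₀, fun w => le_antisymm (hv₀ w (mem_univ w)) ((hR w).1 (hRu ▸ mem_univ w) v₀)⟩
  refine ⟨cls R, QuotientAddGroup.mk b - cls R, cls_ne_zero ⟨v₀, hR₀⟩ hRu,
    sub_ne_zero.2 hne, (add_sub_cancel _ _).symm, ?_⟩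
  rw [cls, ← QuotientAddGroup.mk_sub, BL_mk]
  exact Bq_ind_sub_nonneg_of_forall_mem_iff hR

theorem forall_edge_eq_zero_of_Bq_ind_sub_nonneg {b : V → ℤ} {R : Finset V}
    (hB : 0 ≤ Bq e b (ind R - b)) :
    ∀ u v, 0 < e u v → (b v - b u) * (ind R v - ind R u - (b v - b u)) = 0 := by
  have hind : ∀ u v, |ind R v - ind R u| ≤ 1 := fun u v => by
    by_cases hu : u ∈ R <;> by_cases hv : v ∈ R <;> simp [ind, hu, hv]
  have hmul : ∀ n m : ℤ, |m| ≤ 1 → n * (m - n) ≤ 0 := fun n m hm => by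
    obtain ⟨hm₁, hm₂⟩ := abs_le.1 hm
    obtain h | h | h := lt_trichotomy n 0 <;> nlinarith
  simpa only [Pi.sub_apply, sub_sub_sub_comm] using
    forall_edge_eq_zero_of_Bq_nonneg (fun u v _ => by
      simpa only [Pi.sub_apply, sub_sub_sub_comm] using hmul (b v - b u) _ (hind u v)) hB

theorem irredGL_cls_of_indConn (hsymm : ∀ u v, e u v = e v u)
    (hconn : (SimpleGraph.fromRel fun u v => 0 < e u v).Connected) {R : Finset V}
    (hR : IndConn e R) (hRc : IndConn e Rᶜ) : IrredGL e (cls R) := by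
  rintro ⟨y, z, hy, hz, hyz, hB⟩
  obtain ⟨b, rfl⟩ := QuotientAddGroup.mk_surjective y
  obtain rfl : z = QuotientAddGroup.mk (ind R - b) := by
    rw [← cls_sub_mk, hyz, add_sub_cancel_left]
  have hedge := forall_edge_eq_zero_of_Bq_ind_sub_nonneg hB
  have hsame : ∀ u v, 0 < e u v → (u ∈ R ↔ v ∈ R) → b u = b v := fun u v he huv => by
    have hind : ind R v = ind R u := by simp [ind, huv]
    have := hedge u v he
    rw [hind, sub_self, zero_sub, mul_neg, neg_eq_zero, mul_self_eq_zero] at this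
    omega
  obtain ⟨⟨u₀, hu₀⟩⟩ := hR.nonempty
  obtain ⟨⟨v₀, hv₀⟩⟩ := hRc.nonempty
  obtain ⟨u, hu : u ∈ R, v, hv : v ∉ R, he⟩ :=
    exists_edge_of_connected hsymm hconn (S := R) hu₀ (mem_compl.1 hv₀)
  have hbR : ∀ w ∈ R, b w = b u := fun w hw =>
    hR.eq_of_forall_edge (fun a ha c hc he => hsame a c he (by simp [ha, hc])) hw hu
  have hbRc : ∀ w ∉ R, b w = b v := fun w hw =>
    hRc.eq_of_forall_edge (fun a ha c hc he => hsame a c he (by simp_all))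
      (mem_compl.2 hw) (mem_compl.2 hv)
  have hcross := hedge u v he
  simp only [ind, hu, hv, if_true, if_false] at hcross
  rcases mul_eq_zero.1 hcross with h | h
  · refine hy ((mk_eq_zero_iff b).2 ⟨b u, fun w => ?_⟩)
    by_cases hw : w ∈ R
    · exact hbR w hw
    · rw [hbRc w hw]; omega
  · refine hz ((mk_eq_zero_iff _).2 ⟨1 - b u, fun w => ?_⟩)
    by_cases hw : w ∈ R
    · simp [ind, hw, hbR w hw]
    · simp [ind, hw, hbRc w hw]; omega

end

theorem stmt4_general {V : Type} [Fintype V] [Nonempty V] [DecidableEq V]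
    (e : V → V → ℕ) (hsymm : ∀ u v, e u v = e v u)
    (hconn : (SimpleGraph.fromRel fun u v => 0 < e u v).Connected)
    (x : GrLat V) (hx : x ≠ 0) :
    IrredGL e x ↔ ∃ R : Finset V, R ≠ ∅ ∧ R ≠ Finset.univ ∧ x = cls R ∧
      IndConn e R ∧ IndConn e Rᶜ := by
  constructor
  · intro hirr
    obtain ⟨R, hR, rfl⟩ := hirr.exists_eq_cls
    have hRu : R ≠ univ := fun hRu => hx (cls_eq_zero_iff.2 (.inr hRu))
    have hRc : Rᶜ.Nonempty := (compl_ne_univ_iff_nonempty Rᶜ).1 (by rwa [compl_compl])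
    refine ⟨R, hR.ne_empty, hRu, rfl, hirr.indConn hsymm hR, ?_⟩
    exact (cls_compl R ▸ hirr.neg).indConn hsymm hRc
  · rintro ⟨R, -, -, rfl, hR, hRc⟩
    exact irredGL_cls_of_indConn hsymm hconn hR hRc

/-- For a connected multigraph `G`, a nonzero class `x ∈ Λ(G)` is irreducible
if and only if `x = [R]` for some `R ⊆ V`, `R ≠ ∅`, `R ≠ V`, such that both
the induced multigraphs on `R` and on `V ∖ R` are connected. -/
theorem stmt4 {V : Type} [Fintype V] [Nonempty V] [DecidableEq V]
    (e : V → V → ℕ) (hsymm : ∀ u v, e u v = e v u) (hloop : ∀ v, e v v = 0)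
    (hconn : (SimpleGraph.fromRel fun u v => 0 < e u v).Connected)
    (x : GrLat V) (hx : x ≠ 0) :
    IrredGL e x ↔ ∃ R : Finset V, R ≠ ∅ ∧ R ≠ Finset.univ ∧ x = cls R ∧
      IndConn e R ∧ IndConn e Rᶜ :=
  stmt4_general e hsymm hconn x hx
end

section
/- Suppose G is connected, 2-connected (for every vertex v ∈ V the induced multigraph on V∖{v} is connected), and has no cut-edges (e(R, V∖R) ≥ 2 for every nonempty proper subset R ⊆ V). Suppose v ∈ V is a vertex whose class satisfies [{v}] = x + y in Λ(G) for some classes x, y with B(x,y) = −1. Then there exist disjoint subsets R, S ⊆ V∖{v} with R ∪ S = V∖{v} such that, in Λ(G), {x, y} = {[R ∪ {v}], [S ∪ {v}]}, and e(R,S) = 1. Furthermore, there are unique vertices u1, u2 ∈ V∖{v} with B(x, [{u1}]) = 1 and B(y, [{u2}]) = 1, and every vertex w ∉ {v, u1, u2} satisfies B(x, [{w}]) ≤ 0 and B(y, [{w}]) ≤ 0. -/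
open Finset

/-- `e(R,S)`: the number of edges between disjoint vertex sets `R` and `S`. -/
def eSet {V : Type} [Fintype V] (e : V → V → ℕ) (R S : Finset V) : ℕ :=
  ∑ u ∈ R, ∑ v ∈ S, e u v

/-!
Write `x = [f]` and `y = [{v}] - x = [g]` with `g = [{v}] - f`. Then `B(f, f - [{v}]) = 1` and
`B(g, g - [{v}]) = 1`. If `f` exceeded `f v` somewhere, the set `A` where `f` is maximal would
miss `v`, and every edge leaving `A` contributes at least `1` to `B(f, f - [{v}])`, all other
edges contributing `≥ 0`; without cut-edges this gives `B(f, f - [{v}]) ≥ 2`. Hence `f ≤ f v`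
and likewise `g ≤ g v`, which forces `f` to take only the values `f v` and `f v - 1`. So
`x = [R ∪ {v}]` and `y = [S ∪ {v}]` for a partition `R ⊔ S` of `V ∖ {v}`, and then
`B(x, y) = -e(R, S)` and `B(x, [{w}])` is the number of edges from `w ∈ R` to `S`.
-/

lemma Finset.exists_eq_one_of_sum_eq_one {ι : Type*} [DecidableEq ι] {s : Finset ι} {d : ι → ℕ}
    (h : ∑ i ∈ s, d i = 1) : ∃ i ∈ s, d i = 1 ∧ ∀ j ∈ s, j ≠ i → d j = 0 := by
  obtain ⟨i, hi, hdi⟩ := exists_ne_zero_of_sum_ne_zero (h ▸ one_ne_zero)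
  have hsplit := add_sum_erase s d hi
  refine ⟨i, hi, by omega, fun j hj hji => ?_⟩
  exact sum_eq_zero_iff.1 (by omega : ∑ j ∈ s.erase i, d j = 0) j (mem_erase.2 ⟨hji, hj⟩)

section GraphLattice

variable {V : Type} [Fintype V] {e : V → V → ℕ}

lemma mk_eq_mk_of_forall_sub_eq {a b : V → ℤ} (c : ℤ) (h : ∀ u, b u - a u = c) :
    (QuotientAddGroup.mk a : GrLat V) = QuotientAddGroup.mk b :=
  QuotientAddGroup.eq.2 ⟨c, fun u => by simpa [neg_add_eq_sub] using h u⟩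

lemma Bq_symm (b c : V → ℤ) : Bq e b c = Bq e c b := by
  unfold Bq
  congr 1
  exact sum_congr rfl fun u _ => sum_congr rfl fun w _ => by ring

lemma Bq_neg_right (b c : V → ℤ) : Bq e b (-c) = -Bq e b c := by
  simp only [Bq, Pi.neg_apply, mul_sum, ← sum_neg_distrib]
  exact sum_congr rfl fun u _ => sum_congr rfl fun w _ => by push_cast; ring

lemma eSet_comm (hsymm : ∀ u v, e u v = e v u) (R S : Finset V) : eSet e R S = eSet e S R := by
  rw [eSet, eSet, sum_comm]
  exact sum_congr rfl fun u _ => sum_congr rfl fun w _ => hsymm w u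

variable [DecidableEq V]

lemma cls_singleton_sub_cls {v : V} {A : Finset V} (hv : v ∈ A) :
    cls {v} - cls A = cls (insert v Aᶜ) :=
  mk_eq_mk_of_forall_sub_eq 1 fun u => by
    by_cases hu : u = v
    · subst hu; simp [ind, hv]
    · by_cases huA : u ∈ A <;> simp [ind, hu, huA]

lemma sum_sum_eq_sum_sum_add_two_nsmul {M : Type*} [AddCommMonoid M] (T : V → V → M)
    (hT : ∀ u w, T u w = T w u) (A : Finset V) :
    ∑ u, ∑ w, T u w = ∑ u ∈ A, ∑ w ∈ A, T u w + 2 • ∑ u ∈ A, ∑ w ∈ Aᶜ, T u w +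
      ∑ u ∈ Aᶜ, ∑ w ∈ Aᶜ, T u w := by
  have hswap : ∑ u ∈ Aᶜ, ∑ w ∈ A, T u w = ∑ u ∈ A, ∑ w ∈ Aᶜ, T u w := by
    rw [sum_comm]
    exact sum_congr rfl fun u _ => sum_congr rfl fun w _ => hT w u
  simp only [← sum_add_sum_compl A, sum_add_distrib, hswap, two_nsmul]
  abel

lemma Bq_ind_left (hsymm : ∀ u v, e u v = e v u) (A : Finset V) (c : V → ℤ) :
    Bq e (ind A) c = ∑ u ∈ A, ∑ w ∈ Aᶜ, ((c u - c w : ℤ) : ℚ) * e u w := by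
  rw [Bq, sum_sum_eq_sum_sum_add_two_nsmul _ (fun u w => by rw [hsymm]; push_cast; ring) A]
  have hA : ∑ u ∈ A, ∑ w ∈ A,
      ((ind A w - ind A u : ℤ) : ℚ) * ((c w - c u : ℤ) : ℚ) * e u w = 0 :=
    sum_eq_zero fun u hu => sum_eq_zero fun w hw => by simp [ind, hu, hw]
  have hAc : ∑ u ∈ Aᶜ, ∑ w ∈ Aᶜ,
      ((ind A w - ind A u : ℤ) : ℚ) * ((c w - c u : ℤ) : ℚ) * e u w = 0 :=
    sum_eq_zero fun u hu => sum_eq_zero fun w hw => by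
      simp [ind, mem_compl.1 hu, mem_compl.1 hw]
  have hcross : ∑ u ∈ A, ∑ w ∈ Aᶜ,
      ((ind A w - ind A u : ℤ) : ℚ) * ((c w - c u : ℤ) : ℚ) * e u w =
      ∑ u ∈ A, ∑ w ∈ Aᶜ, ((c u - c w : ℤ) : ℚ) * e u w :=
    sum_congr rfl fun u hu => sum_congr rfl fun w hw => by
      simp only [ind, hu, mem_compl.1 hw, if_true, if_false]
      push_cast
      ring
  rw [hA, hAc, two_nsmul, hcross]
  ring

lemma eSet_le_Bq (hsymm : ∀ u v, e u v = e v u) {b c : V → ℤ} (A : Finset V)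
    (hnonneg : ∀ u w, 0 ≤ (b w - b u) * (c w - c u))
    (hcut : ∀ u ∈ A, ∀ w ∉ A, 1 ≤ (b w - b u) * (c w - c u)) :
    (eSet e A Aᶜ : ℚ) ≤ Bq e b c := by
  have hT : ∀ u w, (0 : ℚ) ≤ ((b w - b u : ℤ) : ℚ) * ((c w - c u : ℤ) : ℚ) * e u w := fun u w => by
    rw [← Int.cast_mul]; have := hnonneg u w; positivity
  rw [Bq, sum_sum_eq_sum_sum_add_two_nsmul _ (fun u w => by rw [hsymm]; push_cast; ring) A]
  have hcross : (eSet e A Aᶜ : ℚ) ≤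
      ∑ u ∈ A, ∑ w ∈ Aᶜ, ((b w - b u : ℤ) : ℚ) * ((c w - c u : ℤ) : ℚ) * e u w := by
    simp only [eSet, Nat.cast_sum]
    refine sum_le_sum fun u hu => sum_le_sum fun w hw => ?_
    have h1 : (1 : ℚ) ≤ ((b w - b u : ℤ) : ℚ) * ((c w - c u : ℤ) : ℚ) := by
      exact_mod_cast hcut u hu w (mem_compl.1 hw)
    nlinarith [(e u w).cast_nonneg (α := ℚ)]
  have hA := sum_nonneg fun u (_ : u ∈ A) => sum_nonneg fun w (_ : w ∈ A) => hT u w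
  have hAc := sum_nonneg fun u (_ : u ∈ Aᶜ) => sum_nonneg fun w (_ : w ∈ Aᶜ) => hT u w
  rw [two_nsmul]
  linarith

lemma apply_le_apply_of_Bq_sub_ind_lt_two (hsymm : ∀ u v, e u v = e v u)
    (hnocut : ∀ R : Finset V, R ≠ ∅ → R ≠ univ → 2 ≤ eSet e R Rᶜ)
    {f : V → ℤ} {v : V} (h : Bq e f (f - ind {v}) < 2) (u : V) : f u ≤ f v := by
  by_contra! hu
  obtain ⟨m, -, hm⟩ := exists_max_image univ f ⟨v, mem_univ v⟩
  set A := univ.filter fun w => f w = f m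
  have hmA : m ∈ A := by simp [A]
  have hvA : v ∉ A := by
    simp only [A, mem_filter, mem_univ, true_and]
    linarith [hm u (mem_univ u)]
  have hind : ∀ w, 0 ≤ ind {v} w ∧ ind {v} w ≤ 1 := fun w => by
    unfold ind; split <;> simp
  have hB := eSet_le_Bq (e := e) hsymm A (b := f) (c := f - ind {v})
    -- `d * (d - δ) ≥ 0` for integers `d` and `|δ| ≤ 1`
    (fun u w => by
      simp only [Pi.sub_apply]
      obtain ⟨hu₀, hu₁⟩ := hind u
      obtain ⟨hw₀, hw₁⟩ := hind w
      rcases lt_trichotomy (f w - f u) 0 with hlt | heq | hgt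
      · nlinarith
      · rw [heq, zero_mul]
      · nlinarith)
    (fun u hu w hw => by
      have hfu : f u = f m := (mem_filter.1 hu).2
      have hfw : f w < f m := lt_of_le_of_ne (hm w (mem_univ w)) (by simpa [A] using hw)
      have huv : u ≠ v := fun h => hvA (h ▸ hu)
      have hvu : ind {v} u = 0 := by simp [ind, huv]
      simp only [Pi.sub_apply, hvu]
      nlinarith [(hind w).1])
  have hcut : (2 : ℚ) ≤ eSet e A Aᶜ := by
    exact_mod_cast hnocut A (ne_empty_of_mem hmA) fun h => hvA (h ▸ mem_univ v)
  linarith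

lemma mk_eq_cls_filter_of_forall {f : V → ℤ} {c : ℤ} (h : ∀ u, f u = c ∨ f u = c - 1) :
    (QuotientAddGroup.mk f : GrLat V) = cls (univ.filter fun u => f u = c) :=
  mk_eq_mk_of_forall_sub_eq (1 - c) fun u => by rcases h u with hu | hu <;> simp [ind, hu]

lemma BL_cls_insert_compl (hsymm : ∀ u v, e u v = e v u) {v : V} {A : Finset V} (hv : v ∈ A) :
    BL e (cls A) (cls (insert v Aᶜ)) = -eSet e (A.erase v) Aᶜ := by
  change Bq e (ind A) (ind (insert v Aᶜ)) = _
  rw [Bq_ind_left hsymm, ← add_sum_erase _ _ hv, eSet, Nat.cast_sum, ← sum_neg_distrib]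
  have hvv : ∑ w ∈ Aᶜ, ((ind (insert v Aᶜ) v - ind (insert v Aᶜ) w : ℤ) : ℚ) * e v w = 0 :=
    sum_eq_zero fun w hw => by simp [ind, hw]
  rw [hvv, zero_add]
  refine sum_congr rfl fun u hu => ?_
  rw [Nat.cast_sum, ← sum_neg_distrib]
  refine sum_congr rfl fun w hw => ?_
  have hu' : u ∉ insert v Aᶜ := by simp [ne_of_mem_erase hu, mem_of_mem_erase hu]
  simp [ind, hu', hw]

lemma BL_cls_singleton_of_mem (hsymm : ∀ u v, e u v = e v u) {A : Finset V} {w : V}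
    (hw : w ∈ A) : BL e (cls A) (cls {w}) = ((∑ u ∈ Aᶜ, e w u : ℕ) : ℚ) := by
  change Bq e (ind A) (ind {w}) = _
  rw [Bq_ind_left hsymm, sum_eq_single_of_mem w hw fun u _ huw => ?_]
  · push_cast
    refine sum_congr rfl fun u hu => ?_
    simp [ind, show u ≠ w from fun h => mem_compl.1 hu (h ▸ hw)]
  · refine sum_eq_zero fun x hx => ?_
    simp [ind, huw, show x ≠ w from fun h => mem_compl.1 hx (h ▸ hw)]

lemma BL_cls_singleton_nonpos (hsymm : ∀ u v, e u v = e v u) {A : Finset V} {w : V}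
    (hw : w ∉ A) : BL e (cls A) (cls {w}) ≤ 0 := by
  change Bq e (ind A) (ind {w}) ≤ 0
  rw [Bq_ind_left hsymm]
  refine sum_nonpos fun u hu => sum_nonpos fun x _ => ?_
  have hu' : u ≠ w := fun h => hw (h ▸ hu)
  by_cases hx : x = w <;> simp [ind, hu', hx]

lemma exists_BL_cls_singleton_eq_one (hsymm : ∀ u v, e u v = e v u) {v : V} {A : Finset V}
    (h : eSet e (A.erase v) Aᶜ = 1) :
    ∃ u₁, u₁ ≠ v ∧ BL e (cls A) (cls {u₁}) = 1 ∧
      ∀ w, w ≠ v → w ≠ u₁ → BL e (cls A) (cls {w}) ≤ 0 := by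
  obtain ⟨u₁, hu₁, h1, h0⟩ := exists_eq_one_of_sum_eq_one h
  refine ⟨u₁, ne_of_mem_erase hu₁, ?_, fun w hwv hw => ?_⟩
  · rw [BL_cls_singleton_of_mem hsymm (mem_of_mem_erase hu₁), h1, Nat.cast_one]
  · by_cases hwA : w ∈ A
    · rw [BL_cls_singleton_of_mem hsymm hwA, h0 w (mem_erase.2 ⟨hwv, hwA⟩) hw, Nat.cast_zero]
    · exact BL_cls_singleton_nonpos hsymm hwA

end GraphLattice

theorem stmt6_general {V : Type} [Fintype V] [DecidableEq V]
    (e : V → V → ℕ) (hsymm : ∀ u v, e u v = e v u)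
    (hnocut : ∀ R : Finset V, R ≠ ∅ → R ≠ Finset.univ → 2 ≤ eSet e R Rᶜ)
    (v : V) (x y : GrLat V) (hxy : cls {v} = x + y) (hB : BL e x y = -1) :
    ∃ R S : Finset V, Disjoint R S ∧ v ∉ R ∧ v ∉ S ∧
      R ∪ S = ({v} : Finset V)ᶜ ∧
      ((x = cls (insert v R) ∧ y = cls (insert v S)) ∨
        (x = cls (insert v S) ∧ y = cls (insert v R))) ∧
      eSet e R S = 1 ∧
      ∃ u₁ u₂ : V, u₁ ≠ v ∧ u₂ ≠ v ∧
        BL e x (cls {u₁}) = 1 ∧ BL e y (cls {u₂}) = 1 ∧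
        (∀ u, u ≠ v → BL e x (cls {u}) = 1 → u = u₁) ∧
        (∀ u, u ≠ v → BL e y (cls {u}) = 1 → u = u₂) ∧
        (∀ w, w ≠ v → w ≠ u₁ → w ≠ u₂ →
          BL e x (cls {w}) ≤ 0 ∧ BL e y (cls {w}) ≤ 0) := by
  obtain ⟨f, rfl⟩ := QuotientAddGroup.mk_surjective x
  have hy : y = cls {v} - QuotientAddGroup.mk f := eq_sub_of_add_eq' hxy.symm
  have hfg : Bq e f (ind {v} - f) = -1 := by rw [← hB, hy]; rfl
  have hf := apply_le_apply_of_Bq_sub_ind_lt_two hsymm hnocut (f := f) (v := v)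
    (by rw [← neg_sub, Bq_neg_right, hfg]; norm_num)
  have hg := apply_le_apply_of_Bq_sub_ind_lt_two hsymm hnocut (f := ind {v} - f) (v := v)
    (by rw [sub_sub_cancel_left, Bq_neg_right, Bq_symm, hfg]; norm_num)
  set A := univ.filter fun u => f u = f v
  have hvA : v ∈ A := by simp [A]
  have hx : QuotientAddGroup.mk f = cls A := mk_eq_cls_filter_of_forall fun u => by
    by_cases hu : u = v
    · exact Or.inl (hu ▸ rfl)
    · have hfu := hf u
      have hgu := hg u
      simp only [Pi.sub_apply, ind, mem_singleton, hu, if_true, if_false] at hgu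
      omega
  rw [hx, cls_singleton_sub_cls hvA] at hy
  subst hy
  have heRS : eSet e (A.erase v) Aᶜ = 1 := by
    have := BL_cls_insert_compl hsymm hvA (e := e)
    rw [← hx, hB] at this
    exact_mod_cast neg_injective this.symm
  obtain ⟨u₁, hu₁v, hu₁, hle₁⟩ := exists_BL_cls_singleton_eq_one hsymm heRS
  obtain ⟨u₂, hu₂v, hu₂, hle₂⟩ := exists_BL_cls_singleton_eq_one hsymm (A := insert v Aᶜ) (v := v)
    (by rwa [erase_insert (by simpa using hvA), compl_insert, compl_compl, eSet_comm hsymm])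
  rw [hx]
  refine ⟨A.erase v, Aᶜ, disjoint_compl_right.mono_left (erase_subset v A), notMem_erase v A,
    by simpa using hvA, ?_, Or.inl ⟨by rw [insert_erase hvA], rfl⟩, heRS, u₁, u₂, hu₁v, hu₂v,
    hu₁, hu₂, fun u hu h => by_contra fun hne => by linarith [hle₁ u hu hne],
    fun u hu h => by_contra fun hne => by linarith [hle₂ u hu hne],
    fun w hwv hw₁ hw₂ => ⟨hle₁ w hwv hw₁, hle₂ w hwv hw₂⟩⟩
  ext u
  by_cases hu : u = v <;> simp [hu, hvA, em]

/-- Suppose `G` is connected, 2-connected and has no cut-edges, and a vertex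
class `[{v}]` satisfies `[{v}] = x + y` in `Λ(G)` with `B(x,y) = −1`.  Then
`V ∖ {v}` splits into disjoint `R, S` with `{x,y} = {[R ∪ {v}], [S ∪ {v}]}`
and `e(R,S) = 1`; moreover there are unique vertices `u₁, u₂ ≠ v` with
`B(x,[u₁]) = 1` and `B(y,[u₂]) = 1`, and every `w ∉ {v,u₁,u₂}` has
`B(x,[w]) ≤ 0` and `B(y,[w]) ≤ 0`. -/
theorem stmt6 {V : Type} [Fintype V] [Nonempty V] [DecidableEq V]
    (e : V → V → ℕ) (hsymm : ∀ u v, e u v = e v u) (hloop : ∀ v, e v v = 0)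
    (hconn : (SimpleGraph.fromRel fun u v => 0 < e u v).Connected)
    (h2conn : ∀ v : V, IndConn e ({v} : Finset V)ᶜ)
    (hnocut : ∀ R : Finset V, R ≠ ∅ → R ≠ Finset.univ → 2 ≤ eSet e R Rᶜ)
    (v : V) (x y : GrLat V) (hxy : cls {v} = x + y) (hB : BL e x y = -1) :
    ∃ R S : Finset V, Disjoint R S ∧ v ∉ R ∧ v ∉ S ∧
      R ∪ S = ({v} : Finset V)ᶜ ∧
      ((x = cls (insert v R) ∧ y = cls (insert v S)) ∨
        (x = cls (insert v S) ∧ y = cls (insert v R))) ∧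
      eSet e R S = 1 ∧
      ∃ u₁ u₂ : V, u₁ ≠ v ∧ u₂ ≠ v ∧
        BL e x (cls {u₁}) = 1 ∧ BL e y (cls {u₂}) = 1 ∧
        (∀ u, u ≠ v → BL e x (cls {u}) = 1 → u = u₁) ∧
        (∀ u, u ≠ v → BL e y (cls {u}) = 1 → u = u₂) ∧
        (∀ w, w ≠ v → w ≠ u₁ → w ≠ u₂ →
          BL e x (cls {w}) ≤ 0 ∧ BL e y (cls {w}) ≤ 0) :=
  stmt6_general e hsymm hnocut v x y hxy hB
end

section
/- Suppose G is connected and has no cut-edges, i.e., e(R, V∖R) ≥ 2 for every nonempty proper subset R ⊆ V. Then there is no class x ∈ Λ(G) with B(x,x) = 1. -/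
open Finset

lemma key_ne_one {V : Type} [Fintype V] [Nonempty V] [DecidableEq V]
    (e : V → V → ℕ) (hsymm : ∀ u v, e u v = e v u)
    (hnocut : ∀ R : Finset V, R ≠ ∅ → R ≠ Finset.univ → 2 ≤ eSet e R Rᶜ)
    (b : V → ℤ) : Bq e b b ≠ 1 := by
  by_cases hconst : ∀ u v : V, b u = b v
  · intro h
    have hz : Bq e b b = 0 := by
      unfold Bq
      have h0 : (∑ u : V, ∑ v : V,
          ((b v - b u : ℤ) : ℚ) * ((b v - b u : ℤ) : ℚ) * (e u v : ℚ)) = 0 :=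
        Finset.sum_eq_zero fun u _ => Finset.sum_eq_zero fun v _ => by
          rw [hconst u v]; simp
      rw [h0, mul_zero]
    rw [hz] at h; norm_num at h
  · push_neg at hconst
    intro h
    obtain ⟨w, -, hw⟩ := Finset.exists_max_image Finset.univ b
      ⟨Classical.arbitrary V, Finset.mem_univ _⟩
    set R : Finset V := Finset.univ.filter (fun v => b v = b w) with hRdef
    have hwR : w ∈ R := by simp [hRdef]
    have hRne : R ≠ ∅ := by
      intro hc; rw [hc] at hwR; exact absurd hwR (Finset.notMem_empty w)
    have hRnu : R ≠ Finset.univ := by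
      obtain ⟨u, v, huv⟩ := hconst
      intro hc
      have hu : b u = b w := by
        have : u ∈ R := hc ▸ Finset.mem_univ u
        simpa [hRdef] using this
      have hv : b v = b w := by
        have : v ∈ R := hc ▸ Finset.mem_univ v
        simpa [hRdef] using this
      exact huv (hu.trans hv.symm)
    have h2 : 2 ≤ eSet e R Rᶜ := hnocut R hRne hRnu
    -- the integer version of the quadratic form
    set f : V → V → ℤ := fun u v => (b v - b u) ^ 2 * (e u v : ℤ) with hfdef
    have hfnn : ∀ u v, 0 ≤ f u v := by
      intro u v
      exact mul_nonneg (sq_nonneg _) (Int.natCast_nonneg _)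
    have hT : (↑(∑ u : V, ∑ v : V, f u v) : ℚ) = 2 * Bq e b b := by
      unfold Bq
      rw [← mul_assoc]
      norm_num
      simp only [hfdef]
      push_cast
      exact Finset.sum_congr rfl fun u _ => Finset.sum_congr rfl fun v _ => by push_cast; ring
    have hT2 : (∑ u : V, ∑ v : V, f u v) = 2 := by
      have : (↑(∑ u : V, ∑ v : V, f u v) : ℚ) = 2 := by rw [hT, h]; norm_num
      exact_mod_cast this
    -- lower bound on the cross terms
    have hmemR : ∀ u, u ∈ R ↔ b u = b w := by intro u; simp [hRdef]
    have hmemRc : ∀ u, u ∈ Rᶜ ↔ b u ≠ b w := by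
      intro u; simp [hRdef]
    have hcross1 : (↑(eSet e R Rᶜ) : ℤ) ≤ ∑ u ∈ R, ∑ v ∈ Rᶜ, f u v := by
      unfold eSet
      push_cast
      refine Finset.sum_le_sum fun u hu => Finset.sum_le_sum fun v hv => ?_
      have hbu : b u = b w := (hmemR u).1 hu
      have hbv : b v ≠ b w := (hmemRc v).1 hv
      have hle : b v ≤ b w := hw v (Finset.mem_univ v)
      have hd : b v - b u ≤ -1 := by omega
      have h1 : 1 ≤ (b v - b u) ^ 2 := by nlinarith
      have hen : (0 : ℤ) ≤ (e u v : ℤ) := Int.natCast_nonneg _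
      simp only [hfdef]
      nlinarith
    have hcross2 : (↑(eSet e R Rᶜ) : ℤ) ≤ ∑ u ∈ Rᶜ, ∑ v ∈ R, f u v := by
      unfold eSet
      push_cast
      rw [Finset.sum_comm]
      refine Finset.sum_le_sum fun u hu => Finset.sum_le_sum fun v hv => ?_
      have hbv : b v = b w := (hmemR v).1 hv
      have hbu : b u ≠ b w := (hmemRc u).1 hu
      have hle : b u ≤ b w := hw u (Finset.mem_univ u)
      have hd : b v - b u ≥ 1 := by omega
      have h1 : 1 ≤ (b v - b u) ^ 2 := by nlinarith
      have hen : (0 : ℤ) ≤ (e u v : ℤ) := Int.natCast_nonneg _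
      rw [hsymm v u]
      simp only [hfdef]
      nlinarith
    -- the total sum dominates the two cross sums
    have hsplit : (∑ u ∈ R, ∑ v : V, f u v) + (∑ u ∈ Rᶜ, ∑ v : V, f u v)
        = ∑ u : V, ∑ v : V, f u v := Finset.sum_add_sum_compl R _
    have hb1 : ∑ u ∈ R, ∑ v ∈ Rᶜ, f u v ≤ ∑ u ∈ R, ∑ v : V, f u v :=
      Finset.sum_le_sum fun u _ =>
        Finset.sum_le_sum_of_subset_of_nonneg (Finset.subset_univ _)
          (fun v _ _ => hfnn u v)
    have hb2 : ∑ u ∈ Rᶜ, ∑ v ∈ R, f u v ≤ ∑ u ∈ Rᶜ, ∑ v : V, f u v :=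
      Finset.sum_le_sum fun u _ =>
        Finset.sum_le_sum_of_subset_of_nonneg (Finset.subset_univ _)
          (fun v _ _ => hfnn u v)
    have h4 : (4 : ℤ) ≤ ∑ u : V, ∑ v : V, f u v := by
      have he2 : (2 : ℤ) ≤ (↑(eSet e R Rᶜ) : ℤ) := by exact_mod_cast h2
      omega
    omega

/-- If `G` is connected and has no cut-edges (`e(R, V∖R) ≥ 2` for every
nonempty proper `R ⊆ V`), then no class `x ∈ Λ(G)` has `B(x,x) = 1`. -/
theorem stmt7 {V : Type} [Fintype V] [Nonempty V] [DecidableEq V]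
    (e : V → V → ℕ) (hsymm : ∀ u v, e u v = e v u) (hloop : ∀ v, e v v = 0)
    (hconn : (SimpleGraph.fromRel fun u v => 0 < e u v).Connected)
    (hnocut : ∀ R : Finset V, R ≠ ∅ → R ≠ Finset.univ → 2 ≤ eSet e R Rᶜ) :
    ¬ ∃ x : GrLat V, BL e x x = 1 := by
  rintro ⟨x, hx⟩
  obtain ⟨b, rfl⟩ := QuotientAddGroup.mk_surjective x
  exact key_ne_one e hsymm hnocut b hx
end

section
/- Suppose σ_i ≥ 1 for all 1 ≤ i ≤ r, and set σ_0 = 1. Then for every s with 1 < s ≤ r there exists a subset A ⊆ {0, 1, …, s−1} with 1 ∈ A and σ_s = Σ_{i∈A} σ_i. Moreover, if σ is slack, then A may be chosen with 0 ∉ A. -/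
open Finset

/-- The change-maker condition on `σ₁, …, σᵣ`:
`0 ≤ σ₁ ≤ 1` and `σ_{i−1} ≤ σ_i ≤ σ₁ + ⋯ + σ_{i−1} + 1` for `1 < i ≤ r`. -/
def ChangeMaker (r : ℤ) (σ : ℤ → ℤ) : Prop :=
  0 ≤ σ 1 ∧ σ 1 ≤ 1 ∧ ∀ i, 1 < i → i ≤ r →
    σ (i - 1) ≤ σ i ∧ σ i ≤ (∑ j ∈ Finset.Icc 1 (i - 1), σ j) + 1

/-! The greedy change-making argument. If every integer in `[1, S]` is a
subset sum of a family with total `S`, then adding a new term `x ≤ S` makes every integer in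
`[1, S + x]` a subset sum: those above `S` are `x` plus a subset sum in `[1, S]`. With
`σ₀ = σ₁ = 1` the change-maker inequality `σ_{k+1} ≤ 1 + σ₁ + ⋯ + σ_k` is exactly this
condition for the family `σ₀, …, σ_k`; slackness makes it hold for `σ₁, …, σ_k` alone. -/

section SubsetSums

variable {ι : Type*}

def SubsetSumsCover (σ : ι → ℤ) (i₀ : ι) (I : Finset ι) : Prop :=
  ∀ n, 1 ≤ n → n ≤ ∑ i ∈ I, σ i → ∃ A ⊆ I, i₀ ∈ A ∧ n = ∑ i ∈ A, σ i

theorem subsetSumsCover_singleton {σ : ι → ℤ} {i₀ : ι} (h : σ i₀ = 1) :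
    SubsetSumsCover σ i₀ {i₀} := by
  intro n hn1 hn
  rw [sum_singleton, h] at hn
  exact ⟨{i₀}, subset_rfl, mem_singleton_self i₀, by rw [sum_singleton]; omega⟩

variable [DecidableEq ι]

theorem SubsetSumsCover.insert {σ : ι → ℤ} {i₀ x : ι} {I : Finset ι}
    (hI : SubsetSumsCover σ i₀ I) (hx : x ∉ I) (hle : σ x ≤ ∑ i ∈ I, σ i) :
    SubsetSumsCover σ i₀ (insert x I) := by
  intro n hn1 hn
  rw [sum_insert hx] at hn
  by_cases hsmall : n ≤ ∑ i ∈ I, σ i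
  · obtain ⟨A, hAI, hi₀, rfl⟩ := hI n hn1 hsmall
    exact ⟨A, hAI.trans (subset_insert x I), hi₀, rfl⟩
  · obtain ⟨A, hAI, hi₀, hA⟩ := hI (n - σ x) (by omega) (by omega)
    have hxA : x ∉ A := fun h => hx (hAI h)
    refine ⟨Insert.insert x A, insert_subset_insert x hAI, mem_insert_of_mem hi₀, ?_⟩
    rw [sum_insert hxA, ← hA]
    ring

end SubsetSums

theorem SubsetSumsCover.Icc_extend_right {σ : ℤ → ℤ} {i₀ a b m : ℤ} (hab : a ≤ b)
    (hbase : SubsetSumsCover σ i₀ (Icc a b))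
    (hstep : ∀ k, b ≤ k → k < m → σ (k + 1) ≤ ∑ j ∈ Icc a k, σ j) (hbm : b ≤ m) :
    SubsetSumsCover σ i₀ (Icc a m) := by
  induction m, hbm using Int.leInduction with
  | base => exact hbase
  | succ k hbk ih =>
    have hcover := ih fun j hbj hjk => hstep j hbj (by omega)
    rw [← insert_Icc_right_eq_Icc_add_one (by omega)]
    exact hcover.insert (fun h => by rw [mem_Icc] at h; omega) (hstep k hbk (by omega))

section ChangeMaker

variable {r : ℤ} {σ : ℤ → ℤ}

theorem ChangeMaker.le_one_add_sum (hcm : ChangeMaker r σ) {k : ℤ} (hk : 1 ≤ k) (hkr : k < r) :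
    σ (k + 1) ≤ 1 + ∑ j ∈ Icc 1 k, σ j := by
  have h := (hcm.2.2 (k + 1) (by omega) (by omega)).2
  rw [add_sub_cancel_right] at h
  omega

theorem ChangeMaker.le_sum_of_forall_ne (hcm : ChangeMaker r σ)
    (hslack : ∀ t, 1 < t → t ≤ r → σ t ≠ 1 + ∑ j ∈ Icc 1 (t - 1), σ j)
    {k : ℤ} (hk : 1 ≤ k) (hkr : k < r) : σ (k + 1) ≤ ∑ j ∈ Icc 1 k, σ j := by
  have hne := hslack (k + 1) (by omega) (by omega)
  rw [add_sub_cancel_right] at hne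
  have := hcm.le_one_add_sum hk hkr
  omega

theorem sum_Icc_zero_eq_add {k : ℤ} (hk : 0 ≤ k) :
    ∑ j ∈ Icc 0 k, σ j = σ 0 + ∑ j ∈ Icc 1 k, σ j := by
  rw [← insert_Icc_add_one_left_eq_Icc hk, sum_insert (by simp)]
  rfl

theorem ChangeMaker.subsetSumsCover_Icc_zero (hcm : ChangeMaker r σ) (hσ0 : σ 0 = 1)
    (hσ1 : σ 1 = 1) {m : ℤ} (hm : 1 ≤ m) (hmr : m ≤ r) : SubsetSumsCover σ 1 (Icc 0 m) := by
  have hbase : SubsetSumsCover σ 1 (Icc 0 1) := by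
    rw [← insert_Icc_add_one_left_eq_Icc zero_le_one, zero_add, Icc_self]
    exact (subsetSumsCover_singleton hσ1).insert (by simp) (by simp [hσ0, hσ1])
  refine hbase.Icc_extend_right zero_le_one (fun k hk hkm => ?_) hm
  rw [sum_Icc_zero_eq_add (by omega), hσ0]
  exact hcm.le_one_add_sum hk (by omega)

theorem ChangeMaker.subsetSumsCover_Icc_one (hcm : ChangeMaker r σ) (hσ1 : σ 1 = 1)
    (hslack : ∀ t, 1 < t → t ≤ r → σ t ≠ 1 + ∑ j ∈ Icc 1 (t - 1), σ j)
    {m : ℤ} (hm : 1 ≤ m) (hmr : m ≤ r) : SubsetSumsCover σ 1 (Icc 1 m) := by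
  have hbase : SubsetSumsCover σ 1 (Icc 1 1) := by
    rw [Icc_self]
    exact subsetSumsCover_singleton hσ1
  exact hbase.Icc_extend_right le_rfl
    (fun k hk hkm => hcm.le_sum_of_forall_ne hslack hk (by omega)) hm

end ChangeMaker

theorem stmt8_general (r : ℤ) (σ : ℤ → ℤ) (hcm : ChangeMaker r σ)
    (hpos : ∀ i, 1 ≤ i → i ≤ r → 1 ≤ σ i) (hσ0 : σ 0 = 1)
    (s : ℤ) (hs1 : 1 < s) (hsr : s ≤ r) :
    (∃ A ⊆ Finset.Icc (0 : ℤ) (s - 1), 1 ∈ A ∧ σ s = ∑ i ∈ A, σ i) ∧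
      ((∀ t, 1 < t → t ≤ r → σ t ≠ 1 + ∑ j ∈ Finset.Icc 1 (t - 1), σ j) →
        ∃ A ⊆ Finset.Icc (0 : ℤ) (s - 1), 1 ∈ A ∧ (0 : ℤ) ∉ A ∧
          σ s = ∑ i ∈ A, σ i) := by
  have hσ1 : σ 1 = 1 := le_antisymm hcm.2.1 (hpos 1 le_rfl (by omega))
  have hσs : 1 ≤ σ s := hpos s (by omega) hsr
  constructor
  · refine hcm.subsetSumsCover_Icc_zero hσ0 hσ1 (by omega) (by omega) (σ s) hσs ?_
    rw [sum_Icc_zero_eq_add (by omega), hσ0]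
    simpa using hcm.le_one_add_sum (k := s - 1) (by omega) (by omega)
  · intro hslack
    have hle : σ s ≤ ∑ j ∈ Icc 1 (s - 1), σ j := by
      simpa using hcm.le_sum_of_forall_ne hslack (k := s - 1) (by omega) (by omega)
    obtain ⟨A, hA, h1A, hsum⟩ :=
      hcm.subsetSumsCover_Icc_one hσ1 hslack (by omega) (by omega) (σ s) hσs hle
    exact ⟨A, hA.trans (Icc_subset_Icc_left zero_le_one), h1A,
      fun h0 => by simpa using hA h0, hsum⟩

/-- Suppose `σᵢ ≥ 1` for `1 ≤ i ≤ r` and `σ₀ = 1`.  For every `1 < s ≤ r`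
there is `A ⊆ {0, 1, …, s−1}` with `1 ∈ A` and `σ_s = ∑_{i∈A} σᵢ`; moreover,
if `σ` is slack (no `σ_t` with `t > 1` is tight), `A` may be chosen with
`0 ∉ A`. -/
theorem stmt8 (r : ℤ) (hr : 1 ≤ r) (σ : ℤ → ℤ) (hcm : ChangeMaker r σ)
    (hpos : ∀ i, 1 ≤ i → i ≤ r → 1 ≤ σ i) (hσ0 : σ 0 = 1)
    (s : ℤ) (hs1 : 1 < s) (hsr : s ≤ r) :
    (∃ A ⊆ Finset.Icc (0 : ℤ) (s - 1), 1 ∈ A ∧ σ s = ∑ i ∈ A, σ i) ∧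
      ((∀ t, 1 < t → t ≤ r → σ t ≠ 1 + ∑ j ∈ Finset.Icc 1 (t - 1), σ j) →
        ∃ A ⊆ Finset.Icc (0 : ℤ) (s - 1), 1 ∈ A ∧ (0 : ℤ) ∉ A ∧
          σ s = ∑ i ∈ A, σ i) :=
  stmt8_general r σ hcm hpos hσ0 s hs1 hsr
end

section
/- Suppose σ_i ≥ 1 for all 1 ≤ i ≤ r. For each 1 ≤ s ≤ r let v_s ∈ ℤ^{r+2} be a vector of the following form: if σ_s = 1 + σ_1 + ⋯ + σ_{s−1}, then v_s = −e_s + e_{−1} + e_0 + e_1 + ⋯ + e_{s−1}; otherwise, v_s = −e_s + e_{s−1} + Σ_{i∈A_s} e_i for some subset A_s ⊆ {1, …, s−2} with Σ_{i∈A_s} σ_i = σ_s − σ_{s−1}. Then each v_s lies in L and {v_1, …, v_r} is a ℤ-module basis of L. -/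
open Finset

/-- The standard basis vector `e j` of `ℤ^{r+2}`, realised as a function
`ℤ → ℤ` (only indices `-1, 0, 1, …, r` are used). -/
def stdE (j : ℤ) : ℤ → ℤ := fun i => if i = j then 1 else 0

/-- The vector `σ = e₀ + σ₁e₁ + ⋯ + σᵣeᵣ`. -/
def sigmaVec (r : ℤ) (σ : ℤ → ℤ) : ℤ → ℤ :=
  fun i => if i = 0 then 1 else if 1 ≤ i ∧ i ≤ r then σ i else 0

/-- The vector `ρ = e₋₁ − e₀`. -/
def rhoVec : ℤ → ℤ := fun i => stdE (-1) i - stdE 0 i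

/-- The standard inner product on `ℤ^{r+2}` (coordinates `-1, 0, 1, …, r`). -/
noncomputable def ip (r : ℤ) (x y : ℤ → ℤ) : ℤ := ∑ i ∈ Finset.Icc (-1) r, x i * y i

/-- Membership in the change-maker lattice
`L = {v ∈ ℤ^{r+2} : v·σ = v·ρ = 0}`. -/
def memCM (r : ℤ) (σ : ℤ → ℤ) (x : ℤ → ℤ) : Prop :=
  (∀ i, i ∉ Finset.Icc (-1) r → x i = 0) ∧
    ip r x (sigmaVec r σ) = 0 ∧ ip r x rhoVec = 0

/-- A vector `v ∈ L` is irreducible if there are no nonzero `x, y ∈ L` with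
`v = x + y` and `x·y ≥ 0`. -/
def IrredCM (r : ℤ) (σ : ℤ → ℤ) (v : ℤ → ℤ) : Prop :=
  ¬ ∃ x y : ℤ → ℤ, memCM r σ x ∧ memCM r σ y ∧ x ≠ 0 ∧ y ≠ 0 ∧
    v = x + y ∧ 0 ≤ ip r x y

/-- A subset `S` of `ℤ^{r+2}` is indecomposable if it is not an orthogonal
direct sum of two nonzero subgroups. -/
def IndecompCM (r : ℤ) (S : Set (ℤ → ℤ)) : Prop :=
  ¬ ∃ L1 L2 : AddSubgroup (ℤ → ℤ), (L1 : Set (ℤ → ℤ)) ⊆ S ∧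
    (L2 : Set (ℤ → ℤ)) ⊆ S ∧ L1 ≠ ⊥ ∧ L2 ≠ ⊥ ∧ L1 ⊓ L2 = ⊥ ∧
    (∀ x ∈ S, ∃ a ∈ L1, ∃ b ∈ L2, x = a + b) ∧
    (∀ x ∈ L1, ∀ y ∈ L2, ip r x y = 0)

/-!
Every `v s` has the shape `-e_s + ∑_{j ∈ B} e_j` with `B ⊆ {-1, …, s-1}`, where `B` is chosen so
that `∑_{j ∈ B} σ_j = σ_s` and `∑_{j ∈ B} ρ_j = 0`; this puts `v s` in `L`. In the coordinates
`1, …, r` the vectors `v 1, …, v r` therefore form a triangular system with `-1` on the diagonal,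
which gives linear independence. For spanning, subtracting a suitable combination of the `v s`
from `x ∈ L` clears the coordinates `1, …, r`; what remains is a vector of `L` supported on
`{-1, 0}`, and orthogonality to `σ` and `ρ` forces it to vanish.
-/

section Coordinates

variable {r : ℤ} {σ : ℤ → ℤ}

lemma sigmaVec_neg_one : sigmaVec r σ (-1) = 0 := by simp [sigmaVec]

lemma sigmaVec_zero : sigmaVec r σ 0 = 1 := by simp [sigmaVec]

lemma sigmaVec_of_mem_Icc {i : ℤ} (hi : i ∈ Icc 1 r) : sigmaVec r σ i = σ i := by
  rw [mem_Icc] at hi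
  simp [sigmaVec, hi, show i ≠ 0 by omega]

lemma rhoVec_neg_one : rhoVec (-1) = 1 := by simp [rhoVec, stdE]

lemma rhoVec_zero : rhoVec 0 = -1 := by simp [rhoVec, stdE]

lemma rhoVec_of_pos {i : ℤ} (hi : 1 ≤ i) : rhoVec i = 0 := by
  simp [rhoVec, stdE, show i ≠ -1 by omega, show i ≠ 0 by omega]

lemma sum_sigmaVec_of_subset {B : Finset ℤ} (hB : B ⊆ Icc 1 r) :
    ∑ i ∈ B, sigmaVec r σ i = ∑ i ∈ B, σ i :=
  sum_congr rfl fun _ hi => sigmaVec_of_mem_Icc (hB hi)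

lemma sum_rhoVec_of_subset {B : Finset ℤ} {t : ℤ} (hB : B ⊆ Icc 1 t) : ∑ i ∈ B, rhoVec i = 0 :=
  sum_eq_zero fun _ hi => rhoVec_of_pos (mem_Icc.1 (hB hi)).1

end Coordinates

lemma sum_Icc_neg_one {M : Type*} [AddCommMonoid M] (f : ℤ → M) {t : ℤ} (ht : 0 ≤ t) :
    ∑ i ∈ Icc (-1) t, f i = f (-1) + f 0 + ∑ i ∈ Icc 1 t, f i := by
  have h : Icc (-1) t = insert (-1) (insert 0 (Icc 1 t)) := by
    ext i; simp only [mem_Icc, mem_insert]; omega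
  rw [h, sum_insert (by simp only [mem_insert, mem_Icc]; omega),
    sum_insert (by simp only [mem_Icc]; omega), add_assoc]

lemma sum_stdE (B : Finset ℤ) (i : ℤ) : ∑ j ∈ B, stdE j i = if i ∈ B then 1 else 0 := by
  simp [stdE, sum_ite_eq]

lemma ip_sub_sum_mul {ι : Type*} (r : ℤ) (x g : ℤ → ℤ) (S : Finset ι) (c : ι → ℤ)
    (w : ι → ℤ → ℤ) :
    ip r (fun i => x i - ∑ s ∈ S, c s * w s i) g = ip r x g - ∑ s ∈ S, c s * ip r (w s) g := by
  simp only [ip, sub_mul, sum_sub_distrib, sum_mul, mul_sum]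
  rw [sum_comm]
  simp only [mul_assoc]

lemma memCM_sub_sum_mul {ι : Type*} {r : ℤ} {σ x : ℤ → ℤ} {S : Finset ι} {w : ι → ℤ → ℤ}
    (hx : memCM r σ x) (hw : ∀ s ∈ S, memCM r σ (w s)) (c : ι → ℤ) :
    memCM r σ (fun i => x i - ∑ s ∈ S, c s * w s i) := by
  refine ⟨fun i hi => ?_, ?_, ?_⟩
  · show x i - _ = 0
    rw [hx.1 i hi, sum_eq_zero fun s hs => by rw [(hw s hs).1 i hi, mul_zero], sub_zero]
  · rw [ip_sub_sum_mul, hx.2.1, sum_eq_zero fun s hs => by rw [(hw s hs).2.1, mul_zero], sub_zero]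
  · rw [ip_sub_sum_mul, hx.2.2, sum_eq_zero fun s hs => by rw [(hw s hs).2.2, mul_zero], sub_zero]

lemma eq_zero_of_memCM_of_forall_pos {r : ℤ} (hr : 0 ≤ r) {σ y : ℤ → ℤ} (hy : memCM r σ y)
    (hpos : ∀ i, 1 ≤ i → y i = 0) : y = 0 := by
  have hip : ∀ g, ip r y g = y (-1) * g (-1) + y 0 * g 0 := fun g => by
    rw [ip, sum_Icc_neg_one _ hr, sum_eq_zero fun i hi => by rw [hpos i (mem_Icc.1 hi).1, zero_mul],
      add_zero]
  have h0 : y 0 = 0 := by simpa [hip, sigmaVec_neg_one, sigmaVec_zero] using hy.2.1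
  have hm : y (-1) = 0 := by simpa [hip, rhoVec_neg_one, rhoVec_zero, h0] using hy.2.2
  funext i
  by_cases hi : i ∈ Icc (-1) r
  · obtain rfl | rfl | hi1 : i = -1 ∨ i = 0 ∨ 1 ≤ i := by rw [mem_Icc] at hi; omega
    exacts [hm, h0, hpos i hi1]
  · exact hy.1 i hi

section Triangular

variable {r : ℤ} {v : ℤ → ℤ → ℤ}

lemma eq_zero_of_sum_mul_eq_zero_of_triangular (hdiag : ∀ s, 1 ≤ s → s ≤ r → v s s ≠ 0)
    (hupper : ∀ s, 1 ≤ s → s ≤ r → ∀ i, s < i → v s i = 0) {c : ℤ → ℤ}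
    (hc : ∀ i, ∑ s ∈ Icc 1 r, c s * v s i = 0) : ∀ s, 1 ≤ s → s ≤ r → c s = 0 := by
  by_contra! hne
  obtain ⟨s₀, hs₀⟩ : ((Icc 1 r).filter (c · ≠ 0)).Nonempty := by
    obtain ⟨s, h1, h2, hs⟩ := hne; exact ⟨s, by simp [h1, h2, hs]⟩
  -- the largest index with a nonzero coefficient sees only its own diagonal entry
  obtain ⟨s, hs, hmax⟩ := ((Icc 1 r).filter (c · ≠ 0)).exists_max_image id ⟨s₀, hs₀⟩
  simp only [mem_filter, mem_Icc, id] at hs hmax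
  have hsum : ∑ t ∈ Icc 1 r, c t * v t s = c s * v s s := by
    refine sum_eq_single s (fun t ht hts => ?_) (fun h => absurd (mem_Icc.2 hs.1) h)
    rw [mem_Icc] at ht
    rcases lt_or_gt_of_ne hts with hlt | hgt
    · rw [hupper t ht.1 ht.2 s hlt, mul_zero]
    · by_cases hct : c t = 0
      · rw [hct, zero_mul]
      · exact absurd (hmax t ⟨ht, hct⟩) (not_le.2 hgt)
  exact mul_ne_zero hs.2 (hdiag s hs.1.1 hs.1.2) (hsum ▸ hc s)

lemma exists_sum_mul_eq_of_triangular (hdiag : ∀ s, 1 ≤ s → s ≤ r → v s s = -1)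
    (hupper : ∀ s, 1 ≤ s → s ≤ r → ∀ i, s < i → v s i = 0) (x : ℤ → ℤ)
    (hx : ∀ i, r < i → x i = 0) :
    ∃ c : ℤ → ℤ, ∀ i, 1 ≤ i → x i = ∑ s ∈ Icc 1 r, c s * v s i := by
  induction r using Int.inductionOn' (b := 0) generalizing x with
  | zero => exact ⟨0, fun i hi => by simp [hx i hi]⟩
  | pred r hr _ => exact ⟨0, fun i hi => by simp [hx i (by omega)]⟩
  | succ r hr ih =>
    obtain ⟨c, hc⟩ := ih (fun s h1 h2 => hdiag s h1 (by omega))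
      (fun s h1 h2 => hupper s h1 (by omega)) (fun i => x i + x (r + 1) * v (r + 1) i)
      (fun i hi => by
        rcases eq_or_lt_of_le (show r + 1 ≤ i by omega) with rfl | hlt
        · rw [hdiag _ (by omega) le_rfl]; ring
        · rw [hx i hlt, hupper _ (by omega) le_rfl i hlt]; ring)
    refine ⟨Function.update c (r + 1) (-x (r + 1)), fun i hi => ?_⟩
    have hnot : r + 1 ∉ Icc 1 r := by simp
    rw [show Icc 1 (r + 1) = insert (r + 1) (Icc 1 r) by ext; simp only [mem_insert, mem_Icc]; omega,
      sum_insert hnot, Function.update_self,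
      sum_congr rfl fun s hs => by rw [Function.update_of_ne (ne_of_mem_of_not_mem hs hnot)],
      ← hc i hi]
    ring

end Triangular

def standardVec (s : ℤ) (B : Finset ℤ) : ℤ → ℤ := fun i => -(stdE s i) + ∑ j ∈ B, stdE j i

section StandardVec

variable {s : ℤ} {B : Finset ℤ}

lemma standardVec_apply_self (hB : s ∉ B) : standardVec s B s = -1 := by
  simp [standardVec, sum_stdE, hB]
  simp [stdE]

lemma standardVec_apply_of_ne {i : ℤ} (hi : i ≠ s) (hB : i ∉ B) : standardVec s B i = 0 := by
  simp [standardVec, sum_stdE, hB]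
  simp [stdE, hi]

lemma ip_standardVec {r : ℤ} (hs : s ∈ Icc (-1) r) (hB : B ⊆ Icc (-1) r) (g : ℤ → ℤ) :
    ip r (standardVec s B) g = -g s + ∑ i ∈ B, g i := by
  simp only [ip, standardVec, sum_stdE, add_mul, neg_mul, ite_mul, one_mul, zero_mul,
    sum_add_distrib, sum_neg_distrib, sum_ite_mem, inter_eq_right.2 hB]
  simp only [stdE, ite_mul, one_mul, zero_mul, sum_ite_eq', if_pos hs]

lemma memCM_standardVec {r : ℤ} {σ : ℤ → ℤ} (hs : 1 ≤ s) (hsr : s ≤ r)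
    (hB : B ⊆ Icc (-1) (s - 1)) (hσ : ∑ i ∈ B, sigmaVec r σ i = σ s)
    (hρ : ∑ i ∈ B, rhoVec i = 0) : memCM r σ (standardVec s B) := by
  have hs' : s ∈ Icc (-1) r := mem_Icc.2 ⟨by omega, hsr⟩
  have hB' : B ⊆ Icc (-1) r := hB.trans (Icc_subset_Icc_right (by omega))
  refine ⟨fun i hi => standardVec_apply_of_ne (ne_of_mem_of_not_mem hs' hi).symm
    (fun h => hi (hB' h)), ?_, ?_⟩
  · rw [ip_standardVec hs' hB', hσ, sigmaVec_of_mem_Icc (mem_Icc.2 ⟨hs, hsr⟩), neg_add_cancel]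
  · rw [ip_standardVec hs' hB', hρ, rhoVec_of_pos hs, neg_zero, add_zero]

end StandardVec

/-- The two shapes of `v s` allowed in the theorem, according to whether `σ s` is tight. -/
def IsStandardBasisVector (σ : ℤ → ℤ) (s : ℤ) (w : ℤ → ℤ) : Prop :=
  (σ s = 1 + ∑ j ∈ Icc 1 (s - 1), σ j ∧
      w = fun i => -(stdE s i) + ∑ j ∈ Icc (-1) (s - 1), stdE j i) ∨
    (σ s ≠ 1 + ∑ j ∈ Icc 1 (s - 1), σ j ∧
      ∃ A ⊆ Icc (1 : ℤ) (s - 2), (∑ i ∈ A, σ i = σ s - σ (s - 1)) ∧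
        w = fun i => -(stdE s i) + stdE (s - 1) i + ∑ j ∈ A, stdE j i)

section StandardBasis

variable {r s : ℤ} {σ : ℤ → ℤ}

lemma sum_sigmaVec_Icc_neg_one (hs : 1 ≤ s) (hsr : s ≤ r) :
    ∑ i ∈ Icc (-1) (s - 1), sigmaVec r σ i = 1 + ∑ j ∈ Icc 1 (s - 1), σ j := by
  rw [sum_Icc_neg_one _ (by omega), sigmaVec_neg_one, sigmaVec_zero,
    sum_sigmaVec_of_subset (Icc_subset_Icc_right (by omega)), zero_add]

lemma sum_rhoVec_Icc_neg_one (hs : 1 ≤ s) : ∑ i ∈ Icc (-1) (s - 1), rhoVec i = 0 := by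
  rw [sum_Icc_neg_one _ (by omega), rhoVec_neg_one, rhoVec_zero, sum_rhoVec_of_subset subset_rfl]
  norm_num

lemma IsStandardBasisVector.exists_eq_standardVec {w : ℤ → ℤ}
    (hw : IsStandardBasisVector σ s w) (hσ₁ : σ 1 = 1) (hs : 1 ≤ s) (hsr : s ≤ r) :
    ∃ B ⊆ Icc (-1) (s - 1), (∑ i ∈ B, sigmaVec r σ i = σ s) ∧ (∑ i ∈ B, rhoVec i = 0) ∧
      w = standardVec s B := by
  rcases hw with ⟨htight, rfl⟩ | ⟨hslack, A, hA, hAσ, rfl⟩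
  · exact ⟨_, subset_rfl, by rw [sum_sigmaVec_Icc_neg_one hs hsr, htight],
      sum_rhoVec_Icc_neg_one hs, rfl⟩
  · -- `σ 1 = 1` is tight, so a slack index has `s ≥ 2`
    have hs2 : 2 ≤ s := by
      by_contra h
      obtain rfl : s = 1 := by omega
      simp [hσ₁] at hslack
    have hnot : s - 1 ∉ A := fun h => by have := mem_Icc.1 (hA h); omega
    have hB : insert (s - 1) A ⊆ Icc 1 (s - 1) :=
      insert_subset (mem_Icc.2 ⟨by omega, le_rfl⟩) (hA.trans (Icc_subset_Icc_right (by omega)))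
    refine ⟨insert (s - 1) A, hB.trans (Icc_subset_Icc_left (by omega)), ?_,
      sum_rhoVec_of_subset hB, ?_⟩
    · rw [sum_sigmaVec_of_subset (hB.trans (Icc_subset_Icc_right (by omega))), sum_insert hnot,
        hAσ, add_sub_cancel]
    · funext i
      simp only [standardVec, sum_insert hnot, add_assoc]

lemma IsStandardBasisVector.memCM_and_triangular {w : ℤ → ℤ} (hw : IsStandardBasisVector σ s w)
    (hσ₁ : σ 1 = 1) (hs : 1 ≤ s) (hsr : s ≤ r) :
    memCM r σ w ∧ w s = -1 ∧ ∀ i, s < i → w i = 0 := by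
  obtain ⟨B, hB, hBσ, hBρ, rfl⟩ := hw.exists_eq_standardVec hσ₁ hs hsr
  have hlt : ∀ j ∈ B, j < s := fun j hj => by have := mem_Icc.1 (hB hj); omega
  exact ⟨memCM_standardVec hs hsr hB hBσ hBρ,
    standardVec_apply_self fun h => lt_irrefl s (hlt s h),
    fun i hi => standardVec_apply_of_ne hi.ne' fun h => lt_asymm hi (hlt i h)⟩

end StandardBasis

/-- **Standard bases are bases.**  Suppose `σᵢ ≥ 1` for all `1 ≤ i ≤ r`, and
for each `1 ≤ s ≤ r` let `v s` be a standard basis vector: if `σ_s` is tight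
then `v s = −e_s + e₋₁ + e₀ + e₁ + ⋯ + e_{s−1}`, and otherwise
`v s = −e_s + e_{s−1} + ∑_{i ∈ A_s} e_i` for some `A_s ⊆ {1, …, s−2}` with
`∑_{i∈A_s} σᵢ = σ_s − σ_{s−1}`.  Then each `v s` lies in `L` and
`{v 1, …, v r}` is a `ℤ`-module basis of `L`. -/
theorem stmt9 (r : ℤ) (hr : 1 ≤ r) (σ : ℤ → ℤ) (hcm : ChangeMaker r σ)
    (hpos : ∀ i, 1 ≤ i → i ≤ r → 1 ≤ σ i)
    (v : ℤ → (ℤ → ℤ))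
    (hv : ∀ s, 1 ≤ s → s ≤ r →
      (σ s = 1 + ∑ j ∈ Finset.Icc 1 (s - 1), σ j ∧
          v s = fun i => -(stdE s i) + ∑ j ∈ Finset.Icc (-1) (s - 1), stdE j i) ∨
      (σ s ≠ 1 + ∑ j ∈ Finset.Icc 1 (s - 1), σ j ∧
          ∃ A ⊆ Finset.Icc (1 : ℤ) (s - 2), (∑ i ∈ A, σ i = σ s - σ (s - 1)) ∧
            v s = fun i => -(stdE s i) + stdE (s - 1) i + ∑ j ∈ A, stdE j i)) :
    (∀ s, 1 ≤ s → s ≤ r → memCM r σ (v s)) ∧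
    (∀ x, memCM r σ x →
      ∃ c : ℤ → ℤ, x = fun i => ∑ s ∈ Finset.Icc (1 : ℤ) r, c s * v s i) ∧
    (∀ c : ℤ → ℤ,
      (fun i => ∑ s ∈ Finset.Icc (1 : ℤ) r, c s * v s i) = (0 : ℤ → ℤ) →
        ∀ s, 1 ≤ s → s ≤ r → c s = 0) := by
  have hσ₁ : σ 1 = 1 := le_antisymm hcm.2.1 (hpos 1 le_rfl hr)
  have hvs : ∀ s, 1 ≤ s → s ≤ r → memCM r σ (v s) ∧ v s s = -1 ∧ ∀ i, s < i → v s i = 0 :=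
    fun s hs hsr => IsStandardBasisVector.memCM_and_triangular (hv s hs hsr) hσ₁ hs hsr
  have hdiag s hs hsr := (hvs s hs hsr).2.1
  have hupper s hs hsr := (hvs s hs hsr).2.2
  refine ⟨fun s hs hsr => (hvs s hs hsr).1, fun x hx => ?_, fun c hc =>
    eq_zero_of_sum_mul_eq_zero_of_triangular (fun s hs hsr => by simp [hdiag s hs hsr]) hupper
      (congrFun hc)⟩
  obtain ⟨c, hc⟩ := exists_sum_mul_eq_of_triangular hdiag hupper x
    fun i hi => hx.1 i fun h => by rw [mem_Icc] at h; omega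
  have hrest := memCM_sub_sum_mul hx (fun s hs => (hvs s (mem_Icc.1 hs).1 (mem_Icc.1 hs).2).1) c
  have hzero := eq_zero_of_memCM_of_forall_pos (by omega) hrest fun i hi => sub_eq_zero.2 (hc i hi)
  exact ⟨c, funext fun i => sub_eq_zero.1 (congrFun hzero i)⟩
end

section
/- Let w_1, …, w_r ∈ ℤ^{r+2} be vectors of the form w_s = −e_s + e_{s−1} + Σ_{i∈A_s} e_i with A_s ⊆ {−1, 0, 1, …, s−2}, such that each w_s satisfies w_s·e_{−1} = w_s·e_0. Then there exist integers σ'_1, …, σ'_r with σ'_i ≥ 1 for all i, satisfying the change-maker condition, such that the ℤ-span of {w_1, …, w_r} equals {v ∈ ℤ^{r+2} : v·σ' = v·ρ = 0}, where σ' = e_0 + σ'_1 e_1 + ⋯ + σ'_r e_r and ρ = e_{−1} − e_0. In particular, the span of {w_1, …, w_r} is an indecomposable change-maker lattice. -/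
open Finset

/-!
Solving `w s · σ' = 0` for `σ' s` defines `σ'` recursively. Since `w s` is `-e_s + e_{s-1}` plus a
`0/1`-vector below `e_{s-1}`, the recursion reads `σ'_s = σ'_{s-1} + (a sum of earlier σ'_i)`, which
makes `σ'` positive and change-maker. The `w s` are triangular with leading coefficient `-1` at
`e_s`, so they span `L = {v : v·σ' = v·ρ = 0}`.

Indecomposability holds for every change-maker lattice with positive `σ`. The subset-sum property
of change-maker sequences gives vectors `v_k = e_{-1} + e_0 + ∑_{j ∈ S_k} e_j - e_k ∈ L`, again
triangular. Their coefficients lie in `{-1, 0, 1}` with a single negative one, which makes them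
irreducible, so each lies in one summand of an orthogonal splitting `L = L1 ⊕ L2`. Each also pairs
nontrivially with `v_1 = e_{-1} + e_0 - e_1`, so all of them lie in the same summand, and the other
summand is orthogonal to `L`, hence zero.
-/

section InnerProduct

variable {r : ℤ}

lemma ip_comm (x y : ℤ → ℤ) : ip r x y = ip r y x := by
  simp only [ip, mul_comm]

lemma ip_add_smul_left (x y z : ℤ → ℤ) (k : ℤ) :
    ip r (fun i => x i + k * y i) z = ip r x z + k * ip r y z := by
  simp only [ip, add_mul, sum_add_distrib, mul_sum, mul_assoc]

lemma ip_sum_smul_left (c : ℤ → ℤ) (u : ℤ → ℤ → ℤ) (y : ℤ → ℤ) :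
    ip r (fun i => ∑ s ∈ Icc 1 r, c s * u s i) y = ∑ s ∈ Icc 1 r, c s * ip r (u s) y := by
  simp only [ip, sum_mul, mul_sum, mul_assoc]
  exact sum_comm

lemma ip_stdE_left {j : ℤ} (hj : j ∈ Icc (-1) r) (y : ℤ → ℤ) : ip r (stdE j) y = y j := by
  simp [ip, stdE, hj]

lemma ip_eq_add_add_sum (hr : 0 ≤ r) (x y : ℤ → ℤ) :
    ip r x y = x (-1) * y (-1) + x 0 * y 0 + ∑ i ∈ Icc 1 r, x i * y i := by
  have hsplit : Icc (-1) r = insert (-1) (insert 0 (Icc 1 r)) := by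
    ext i; simp only [mem_Icc, mem_insert]; omega
  rw [ip, hsplit, sum_insert (by simp), sum_insert (by simp), add_assoc]

lemma ip_rhoVec (hr : 0 ≤ r) (x : ℤ → ℤ) : ip r x rhoVec = x (-1) - x 0 := by
  have hρ : ∀ i ∈ Icc 1 r, x i * rhoVec i = 0 := fun i hi => by
    rw [mem_Icc] at hi
    simp [rhoVec, stdE, show i ≠ -1 by omega, show i ≠ 0 by omega]
  rw [ip_eq_add_add_sum hr, sum_eq_zero hρ]
  simp [rhoVec, stdE, sub_eq_add_neg]

lemma ip_sigmaVec (hr : 0 ≤ r) (σ x : ℤ → ℤ) :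
    ip r x (sigmaVec r σ) = x 0 + ∑ i ∈ Icc 1 r, x i * σ i := by
  rw [ip_eq_add_add_sum hr]
  have hσ : ∀ i ∈ Icc 1 r, x i * sigmaVec r σ i = x i * σ i := fun i hi => by
    rw [mem_Icc] at hi
    rw [sigmaVec, if_neg (by omega), if_pos hi]
  rw [sum_congr rfl hσ]
  simp [sigmaVec]

lemma eq_zero_of_ip_self_eq_zero {y : ℤ → ℤ} (hy : ∀ i ∉ Icc (-1) r, y i = 0)
    (h : ip r y y = 0) : y = 0 := by
  have hsq := (sum_eq_zero_iff_of_nonneg fun i _ => mul_self_nonneg (y i)).mp h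
  funext i
  by_cases hi : i ∈ Icc (-1) r
  · exact mul_self_eq_zero.mp (hsq i hi)
  · exact hy i hi

end InnerProduct

section Lattice

variable {r : ℤ} {σ : ℤ → ℤ}

lemma memCM.eq_zero_of_forall_Icc_one {x : ℤ → ℤ} (hr : 0 ≤ r) (hx : memCM r σ x)
    (h : ∀ i ∈ Icc 1 r, x i = 0) : x = 0 := by
  obtain ⟨hsupp, hσ, hρ⟩ := hx
  rw [ip_sigmaVec hr, sum_eq_zero fun i hi => by rw [h i hi, zero_mul], add_zero] at hσ
  rw [ip_rhoVec hr, hσ, sub_eq_zero] at hρ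
  funext i
  by_cases hi : i ∈ Icc (-1) r
  · rw [mem_Icc] at hi
    obtain rfl | rfl | hi' : i = -1 ∨ i = 0 ∨ 1 ≤ i := by omega
    exacts [hρ, hσ, h i (mem_Icc.mpr ⟨hi', hi.2⟩)]
  · exact hsupp i hi

lemma memCM.eq_zero_of_nonneg {x : ℤ → ℤ} (hr : 0 ≤ r) (hσ : ∀ i ∈ Icc 1 r, 1 ≤ σ i)
    (hx : memCM r σ x) (hnn : ∀ i ∈ Icc (-1) r, 0 ≤ x i) : x = 0 := by
  have hterm : ∀ i ∈ Icc 1 r, 0 ≤ x i * σ i := fun i hi =>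
    mul_nonneg (hnn i (Icc_subset_Icc (by norm_num) le_rfl hi)) (by linarith [hσ i hi])
  have hsum := hx.2.1
  rw [ip_sigmaVec hr] at hsum
  have hx0 := hnn 0 (mem_Icc.mpr ⟨by norm_num, hr⟩)
  have hzero := (sum_eq_zero_iff_of_nonneg hterm).mp (by linarith [sum_nonneg hterm])
  refine hx.eq_zero_of_forall_Icc_one hr fun i hi => ?_
  have := hσ i hi
  rcases mul_eq_zero.mp (hzero i hi) with h | h
  exacts [h, by omega]

lemma memCM_add_smul {x y : ℤ → ℤ} (hx : memCM r σ x) (hy : memCM r σ y) (k : ℤ) :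
    memCM r σ (fun i => x i + k * y i) := by
  refine ⟨fun i hi => by simp [hx.1 i hi, hy.1 i hi], ?_, ?_⟩
  · rw [ip_add_smul_left, hx.2.1, hy.2.1, mul_zero, add_zero]
  · rw [ip_add_smul_left, hx.2.2, hy.2.2, mul_zero, add_zero]

end Lattice

section Span

variable {r : ℤ} {σ : ℤ → ℤ} {u : ℤ → ℤ → ℤ}

def InIntSpan (r : ℤ) (u : ℤ → ℤ → ℤ) (x : ℤ → ℤ) : Prop :=
  ∃ c : ℤ → ℤ, x = fun i => ∑ s ∈ Icc 1 r, c s * u s i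

lemma InIntSpan.add_smul {x : ℤ → ℤ} {s : ℤ} (hx : InIntSpan r u x) (hs : s ∈ Icc 1 r)
    (k : ℤ) : InIntSpan r u (fun i => x i + k * u s i) := by
  obtain ⟨c, rfl⟩ := hx
  refine ⟨fun t => c t + if t = s then k else 0, funext fun i => ?_⟩
  simp [add_mul, sum_add_distrib, hs]

lemma memCM_of_inIntSpan {x : ℤ → ℤ} (hu : ∀ s ∈ Icc 1 r, memCM r σ (u s))
    (hx : InIntSpan r u x) : memCM r σ x := by
  obtain ⟨c, rfl⟩ := hx
  refine ⟨fun i hi => sum_eq_zero fun s hs => by rw [(hu s hs).1 i hi, mul_zero], ?_, ?_⟩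
  · rw [ip_sum_smul_left]
    exact sum_eq_zero fun s hs => by rw [(hu s hs).2.1, mul_zero]
  · rw [ip_sum_smul_left]
    exact sum_eq_zero fun s hs => by rw [(hu s hs).2.2, mul_zero]

lemma eq_zero_of_forall_ip_eq_zero (hspan : ∀ x, memCM r σ x → InIntSpan r u x)
    {y : ℤ → ℤ} (hy : memCM r σ y) (h : ∀ s ∈ Icc 1 r, ip r (u s) y = 0) : y = 0 := by
  obtain ⟨c, hc⟩ := hspan y hy
  refine eq_zero_of_ip_self_eq_zero hy.1 ?_
  calc ip r y y = ip r (fun i => ∑ s ∈ Icc 1 r, c s * u s i) y := by rw [← hc]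
    _ = ∑ s ∈ Icc 1 r, c s * ip r (u s) y := ip_sum_smul_left c u y
    _ = 0 := sum_eq_zero fun s hs => by rw [h s hs, mul_zero]

lemma inIntSpan_of_triangular (hr : 0 ≤ r)
    (hu : ∀ s ∈ Icc 1 r, memCM r σ (u s) ∧ u s s = -1 ∧ ∀ i, s < i → u s i = 0)
    {x : ℤ → ℤ} (hx : memCM r σ x) : InIntSpan r u x := by
  suffices h : ∀ n, 0 ≤ n → ∀ x, memCM r σ x → (∀ i, n < i → x i = 0) → InIntSpan r u x from
    h r hr x hx fun i hi => hx.1 i (by simp only [mem_Icc]; omega)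
  intro n hn
  induction n, hn using Int.leInduction with
  | base =>
    intro x hx htop
    rw [hx.eq_zero_of_forall_Icc_one hr fun i hi => htop i (by simp only [mem_Icc] at hi; omega)]
    exact ⟨0, funext fun i => by simp⟩
  | succ n hn ih =>
    intro x hx htop
    by_cases hnr : n + 1 ≤ r
    · have hs : n + 1 ∈ Icc 1 r := mem_Icc.mpr ⟨by omega, hnr⟩
      obtain ⟨hmem, hdiag, htri⟩ := hu _ hs
      have hcleared := ih _ (memCM_add_smul hx hmem (x (n + 1))) fun i hi => by
        rcases (show i = n + 1 ∨ n + 1 < i by omega) with rfl | hi'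
        · rw [hdiag]; ring
        · rw [htop i (by omega), htri i hi', mul_zero, add_zero]
      convert hcleared.add_smul hs (-x (n + 1)) using 1
      funext i; ring
    · exact ih x hx fun i hi => by
        by_cases hir : i ≤ r
        · exact htop i (by omega)
        · exact hx.1 i (by simp only [mem_Icc]; omega)

end Span

section Indecomposable

variable {r : ℤ} {σ : ℤ → ℤ}

lemma irredCM_of_abs_le_one (hr : 0 ≤ r) (hσ : ∀ i ∈ Icc 1 r, 1 ≤ σ i) {v : ℤ → ℤ} {k : ℤ}
    (hk : k ∈ Icc (-1) r) (hv : ∀ i, -1 ≤ v i ∧ v i ≤ 1) (hvk : ∀ i, i ≠ k → 0 ≤ v i) :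
    IrredCM r σ v := by
  rintro ⟨x, y, hx, hy, hx0, hy0, hxy, hip⟩
  have hprod_nonpos : ∀ i ∈ Icc (-1) r, x i * y i ≤ 0 := fun i _ => by
    have hvi := hv i
    rw [hxy, Pi.add_apply] at hvi
    by_contra! h
    rcases mul_pos_iff.mp h with ⟨_, _⟩ | ⟨_, _⟩ <;> omega
  have hprod : ∀ i ∈ Icc (-1) r, x i * y i = 0 :=
    (sum_eq_zero_iff_of_nonpos hprod_nonpos).mp (le_antisymm (sum_nonpos hprod_nonpos) hip)
  wlog hxk : x k = 0 generalizing x y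
  · refine this y x hy hx hy0 hx0 (hxy.trans (add_comm x y)) (by rwa [ip_comm])
      (fun i hi => by rw [mul_comm]; exact hprod_nonpos i hi)
      (fun i hi => by rw [mul_comm]; exact hprod i hi) ?_
    exact (mul_eq_zero.mp (hprod k hk)).resolve_left hxk
  -- `x` is `v` with some coordinates erased, so it is nonnegative
  refine hx0 (hx.eq_zero_of_nonneg hr hσ fun i hi => ?_)
  obtain rfl | hik := eq_or_ne i k
  · rw [hxk]
  have hvi := hvk i hik
  rw [hxy, Pi.add_apply] at hvi
  rcases mul_eq_zero.mp (hprod i hi) with h | h <;> omega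

lemma indecompCM_of_spanning {u : ℤ → ℤ → ℤ} {a : ℤ} (ha : a ∈ Icc 1 r)
    (hspan : ∀ x, memCM r σ x → InIntSpan r u x) (hmem : ∀ k ∈ Icc 1 r, memCM r σ (u k))
    (hirr : ∀ k ∈ Icc 1 r, IrredCM r σ (u k)) (hconn : ∀ k ∈ Icc 1 r, ip r (u k) (u a) ≠ 0) :
    IndecompCM r {x | memCM r σ x} := by
  rintro ⟨L1, L2, h1, h2, hne1, hne2, -, hdec, horth⟩
  have hsplit : ∀ k ∈ Icc 1 r, u k ∈ L1 ∨ u k ∈ L2 := fun k hk => by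
    obtain ⟨x, hx, y, hy, hxy⟩ := hdec _ (hmem k hk)
    by_cases hx0 : x = 0
    · right; rwa [hxy, hx0, zero_add]
    by_cases hy0 : y = 0
    · left; rwa [hxy, hy0, add_zero]
    exact (hirr k hk ⟨x, y, h1 hx, h2 hy, hx0, hy0, hxy, (horth x hx y hy).ge⟩).elim
  wlog haL1 : u a ∈ L1 generalizing L1 L2
  · refine this L2 L1 h2 h1 hne2 hne1 (fun x hx => ?_)
      (fun x hx y hy => by rw [ip_comm]; exact horth y hy x hx)
      (fun k hk => (hsplit k hk).symm) ((hsplit a ha).resolve_left haL1)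
    obtain ⟨b, hb, c, hc, rfl⟩ := hdec x hx
    exact ⟨c, hc, b, hb, add_comm b c⟩
  have hall : ∀ k ∈ Icc 1 r, u k ∈ L1 := fun k hk =>
    (hsplit k hk).resolve_right fun hk2 => hconn k hk (by rw [ip_comm]; exact horth _ haL1 _ hk2)
  exact hne2 ((AddSubgroup.eq_bot_iff_forall _).mpr fun y hy =>
    eq_zero_of_forall_ip_eq_zero hspan (h2 hy) fun s hs => horth _ (hall s hs) y hy)

end Indecomposable

def negStdAddSum (k : ℤ) (B : Finset ℤ) : ℤ → ℤ := fun i => -stdE k i + ∑ j ∈ B, stdE j i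

section NegStdAddSum

variable {k : ℤ} {B : Finset ℤ}

lemma negStdAddSum_apply_of_ne {i : ℤ} (hi : i ≠ k) :
    negStdAddSum k B i = if i ∈ B then 1 else 0 := by
  simp [negStdAddSum, stdE, hi]

variable (hB : B ⊆ Icc (-1) (k - 1))
include hB

lemma negStdAddSum_apply_self : negStdAddSum k B k = -1 := by
  have hk : k ∉ B := fun h => by have := mem_Icc.mp (hB h); omega
  simp [negStdAddSum, stdE, hk]

lemma negStdAddSum_apply_of_notMem_Icc (hk : -1 ≤ k) {i : ℤ} (hi : i ∉ Icc (-1) k) :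
    negStdAddSum k B i = 0 := by
  have hik : i ≠ k := by rintro rfl; simp only [mem_Icc, not_and_or] at hi; omega
  rw [negStdAddSum_apply_of_ne hik, if_neg fun h => hi (Icc_subset_Icc le_rfl (by omega) (hB h))]

end NegStdAddSum

lemma negStdAddSum_apply_bounds (k : ℤ) (B : Finset ℤ) (i : ℤ) :
    -1 ≤ negStdAddSum k B i ∧ negStdAddSum k B i ≤ 1 := by
  simp only [negStdAddSum, stdE, sum_ite_eq]
  split_ifs <;> omega

lemma negStdAddSum_nonneg {k i : ℤ} (B : Finset ℤ) (hi : i ≠ k) : 0 ≤ negStdAddSum k B i := by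
  rw [negStdAddSum_apply_of_ne hi]; split_ifs <;> omega

lemma ip_negStdAddSum {r k : ℤ} {B : Finset ℤ} (hk : k ∈ Icc (-1) r) (hB : B ⊆ Icc (-1) r)
    (y : ℤ → ℤ) : ip r (negStdAddSum k B) y = ∑ j ∈ B, y j - y k := by
  simp only [ip, negStdAddSum, add_mul, neg_mul, sum_add_distrib, sum_neg_distrib, sum_mul]
  have hstd : ∀ j ∈ Icc (-1) r, ∑ i ∈ Icc (-1) r, stdE j i * y i = y j := fun j hj =>
    ip_stdE_left hj y
  rw [hstd k hk, sum_comm, sum_congr rfl fun j hj => hstd j (hB hj)]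
  ring

section ChangeMaker

variable {r : ℤ} {σ : ℤ → ℤ}

lemma ChangeMaker.le_sum_add_one (h : ChangeMaker r σ) {i : ℤ} (hi : i ∈ Icc 1 r) :
    σ i ≤ ∑ j ∈ Icc 1 (i - 1), σ j + 1 := by
  rw [mem_Icc] at hi
  obtain rfl | hi1 := eq_or_lt_of_le hi.1
  · simpa using h.2.1
  · exact (h.2.2 i hi1 hi.2).2

lemma ChangeMaker.exists_subset_sum (h : ChangeMaker r σ) {n : ℤ} (hn : 0 ≤ n) (hnr : n ≤ r)
    {t : ℤ} (ht0 : 0 ≤ t) (ht : t ≤ ∑ j ∈ Icc 1 n, σ j) :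
    ∃ S ⊆ Icc 1 n, ∑ j ∈ S, σ j = t := by
  induction n, hn using Int.leInduction generalizing t with
  | base => exact ⟨∅, empty_subset _, by simp at ht ⊢; omega⟩
  | succ n hn ih =>
    have hIcc : Icc 1 (n + 1) = insert (n + 1) (Icc 1 n) := by
      ext i; simp only [mem_Icc, mem_insert]; omega
    have hnot : n + 1 ∉ Icc 1 n := by simp
    rw [hIcc, sum_insert hnot] at ht
    rw [hIcc]
    by_cases hle : t ≤ ∑ j ∈ Icc 1 n, σ j
    · obtain ⟨S, hS, hsum⟩ := ih (by omega) ht0 hle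
      exact ⟨S, hS.trans (subset_insert _ _), hsum⟩
    · have hub := h.le_sum_add_one (mem_Icc.mpr ⟨by omega, hnr⟩)
      rw [add_sub_cancel_right] at hub
      obtain ⟨S, hS, hsum⟩ := ih (by omega) (t := t - σ (n + 1)) (by omega) (by omega)
      refine ⟨insert (n + 1) S, insert_subset_insert _ hS, ?_⟩
      rw [sum_insert fun h => hnot (hS h), hsum]
      ring

lemma insert_insert_subset_Icc {k : ℤ} {S : Finset ℤ} (hk : 1 ≤ k) (hS : S ⊆ Icc 1 (k - 1)) :
    insert (-1) (insert 0 S) ⊆ Icc (-1) (k - 1) :=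
  insert_subset (by simp; omega) (insert_subset (by simp; omega)
    (hS.trans (Icc_subset_Icc (by norm_num) le_rfl)))

lemma memCM_negStdAddSum_insert_insert {k : ℤ} {S : Finset ℤ} (hk : k ∈ Icc 1 r)
    (hS : S ⊆ Icc 1 (k - 1)) (hsum : ∑ j ∈ S, σ j = σ k - 1) :
    memCM r σ (negStdAddSum k (insert (-1) (insert 0 S))) := by
  rw [mem_Icc] at hk
  have hB := insert_insert_subset_Icc hk.1 hS
  have hBr : insert (-1) (insert 0 S) ⊆ Icc (-1) r := hB.trans (Icc_subset_Icc le_rfl (by omega))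
  have hkr : k ∈ Icc (-1) r := mem_Icc.mpr ⟨by omega, hk.2⟩
  have hSr : ∀ j ∈ S, 1 ≤ j ∧ j ≤ r := fun j hj => by have := mem_Icc.mp (hS hj); omega
  have h0 : (0 : ℤ) ∉ S := fun h => absurd (hSr _ h).1 (by norm_num)
  have h1 : (-1 : ℤ) ∉ insert 0 S := by
    rw [mem_insert, not_or]
    exact ⟨by norm_num, fun h => absurd (hSr _ h).1 (by norm_num)⟩
  refine ⟨fun i hi => negStdAddSum_apply_of_notMem_Icc hB (by omega) fun h => hi
    (Icc_subset_Icc le_rfl hk.2 h), ?_, ?_⟩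
  · have hσS : ∀ j ∈ S, sigmaVec r σ j = σ j := fun j hj => by
      obtain ⟨hj1, hjr⟩ := hSr j hj
      rw [sigmaVec, if_neg (by omega), if_pos ⟨hj1, hjr⟩]
    rw [ip_negStdAddSum hkr hBr, sum_insert h1, sum_insert h0, sum_congr rfl hσS, hsum]
    simp [sigmaVec, show k ≠ 0 by omega, hk.1, hk.2]
  · have hρS : ∀ j ∈ S, rhoVec j = 0 := fun j hj => by
      have := (hSr j hj).1
      simp [rhoVec, stdE, show j ≠ 0 by omega, show j ≠ -1 by omega]
    rw [ip_negStdAddSum hkr hBr, sum_insert h1, sum_insert h0, sum_eq_zero hρS]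
    simp [rhoVec, stdE, show k ≠ 0 by omega, show k ≠ -1 by omega]

end ChangeMaker

theorem indecompCM_of_changeMaker {r : ℤ} {σ : ℤ → ℤ} (hr : 1 ≤ r) (hσ : ChangeMaker r σ)
    (hpos : ∀ i ∈ Icc 1 r, 1 ≤ σ i) : IndecompCM r {x | memCM r σ x} := by
  have hsub : ∀ k ∈ Icc 1 r, ∃ S ⊆ Icc 1 (k - 1), ∑ j ∈ S, σ j = σ k - 1 := fun k hk => by
    have := hσ.le_sum_add_one hk
    have := hpos k hk
    rw [mem_Icc] at hk
    exact hσ.exists_subset_sum (by omega) (by omega) (by omega) (by omega)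
  choose! S hS hsum using hsub
  set v : ℤ → ℤ → ℤ := fun k => negStdAddSum k (insert (-1) (insert 0 (S k)))
  have hB : ∀ k ∈ Icc 1 r, insert (-1) (insert 0 (S k)) ⊆ Icc (-1) (k - 1) := fun k hk =>
    insert_insert_subset_Icc (mem_Icc.mp hk).1 (hS k hk)
  have hmem : ∀ k ∈ Icc 1 r, memCM r σ (v k) := fun k hk =>
    memCM_negStdAddSum_insert_insert hk (hS k hk) (hsum k hk)
  have hspan : ∀ x, memCM r σ x → InIntSpan r v x := fun x hx =>
    inIntSpan_of_triangular (by omega) (fun s hs => ⟨hmem s hs, negStdAddSum_apply_self (hB s hs),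
      fun i hi => negStdAddSum_apply_of_notMem_Icc (hB s hs) (by simp at hs; omega)
        (by simp only [mem_Icc]; omega)⟩) hx
  have hirr : ∀ k ∈ Icc 1 r, IrredCM r σ (v k) := fun k hk =>
    irredCM_of_abs_le_one (by omega) hpos (Icc_subset_Icc (by norm_num) le_rfl hk)
      (negStdAddSum_apply_bounds _ _) fun i hi => negStdAddSum_nonneg _ hi
  have hone : 1 ∈ Icc 1 r := mem_Icc.mpr ⟨le_rfl, hr⟩
  refine indecompCM_of_spanning hone hspan hmem hirr fun k hk => ?_
  have hS1 : S 1 = ∅ := subset_empty.mp (by simpa using hS 1 hone)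
  obtain ⟨hk1, hkr⟩ := mem_Icc.mp hk
  have hB1 : insert (-1) (insert 0 (S 1)) ⊆ Icc (-1) r :=
    (hB 1 hone).trans (Icc_subset_Icc le_rfl (by omega))
  rw [ip_comm, ip_negStdAddSum (by simp; omega) hB1, hS1, insert_empty, sum_insert (by simp),
    sum_singleton]
  simp only [v]
  rw [negStdAddSum_apply_of_ne (by omega), negStdAddSum_apply_of_ne (by omega), if_pos (by simp),
    if_pos (by simp)]
  have := (negStdAddSum_apply_bounds k (insert (-1) (insert 0 (S k))) 1).2
  omega

-- The value `1` at `s ≤ 0` stands for the `e₀`-coefficient of `sigmaVec`.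
noncomputable def cmCoeff (w : ℤ → ℤ → ℤ) (s : ℤ) : ℤ :=
  if s ≤ 0 then 1 else ∑ i ∈ (Ico 0 s).attach, w s i * cmCoeff w i
termination_by s.toNat
decreasing_by have := mem_Ico.mp i.2; omega

section CmCoeff

variable {w : ℤ → ℤ → ℤ} {r s : ℤ}

lemma cmCoeff_of_nonpos (hs : s ≤ 0) : cmCoeff w s = 1 := by
  rw [cmCoeff, if_pos hs]

lemma cmCoeff_of_pos (hs : 0 < s) : cmCoeff w s = ∑ i ∈ Ico 0 s, w s i * cmCoeff w i := by
  rw [cmCoeff, if_neg (by omega), sum_attach (Ico 0 s) fun i => w s i * cmCoeff w i]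

lemma memCM_cmCoeff (hs : s ∈ Icc 1 r) (hss : w s s = -1) (hsupp : ∀ i ∉ Icc (-1) s, w s i = 0)
    (hρ : w s (-1) = w s 0) : memCM r (cmCoeff w) (w s) := by
  rw [mem_Icc] at hs
  refine ⟨fun i hi => hsupp i fun h => hi (Icc_subset_Icc le_rfl hs.2 h), ?_, ?_⟩
  · have hIcc0 : Icc 0 r = insert 0 (Icc 1 r) := by ext i; simp only [mem_Icc, mem_insert]; omega
    calc ip r (w s) (sigmaVec r (cmCoeff w))
        = w s 0 * cmCoeff w 0 + ∑ i ∈ Icc 1 r, w s i * cmCoeff w i := by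
          rw [ip_sigmaVec (by omega), cmCoeff_of_nonpos le_rfl, mul_one]
      _ = ∑ i ∈ Icc 0 r, w s i * cmCoeff w i := by rw [hIcc0, sum_insert (by simp)]
      _ = ∑ i ∈ Icc 0 s, w s i * cmCoeff w i := by
        refine (sum_subset (Icc_subset_Icc le_rfl hs.2) fun i hir his => ?_).symm
        rw [hsupp i (by simp only [mem_Icc] at hir his ⊢; omega), zero_mul]
      _ = 0 := by
        rw [← Ico_insert_right (by omega), sum_insert (by simp), hss, ← cmCoeff_of_pos (by omega)]
        ring
  · rw [ip_rhoVec (by omega), hρ, sub_self]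

variable (hw : ∀ s ∈ Icc 1 r, w s (s - 1) = 1 ∧ ∀ i ∈ Ico 0 s, 0 ≤ w s i ∧ w s i ≤ 1)
include hw

lemma cmCoeff_sub_one_le (hs : s ∈ Icc 1 r) (hnn : ∀ i ∈ Ico 0 s, 0 ≤ cmCoeff w i) :
    cmCoeff w (s - 1) ≤ cmCoeff w s := by
  have hs1 := (mem_Icc.mp hs).1
  have hIco : Ico 0 s = insert (s - 1) (Ico 0 (s - 1)) := by
    ext i; simp only [mem_Ico, mem_insert]; omega
  rw [cmCoeff_of_pos (s := s) (by omega), hIco, sum_insert (by simp), (hw s hs).1, one_mul]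
  refine le_add_of_nonneg_right (sum_nonneg fun i hi => ?_)
  have hi' : i ∈ Ico 0 s := Ico_subset_Ico le_rfl (by omega) hi
  exact mul_nonneg ((hw s hs).2 i hi').1 (hnn i hi')

lemma one_le_cmCoeff (hsr : s ≤ r) : 1 ≤ cmCoeff w s := by
  suffices h : ∀ n, 0 ≤ n → n ≤ r → ∀ i ≤ n, 1 ≤ cmCoeff w i by
    obtain hs | hs := le_or_gt s 0
    · rw [cmCoeff_of_nonpos hs]
    · exact h s hs.le hsr s le_rfl
  intro n hn
  induction n, hn using Int.leInduction with
  | base => exact fun _ i hi => (cmCoeff_of_nonpos hi).ge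
  | succ n hn ih =>
    intro hnr i hi
    obtain hi | rfl := (show i ≤ n ∨ i = n + 1 by omega)
    · exact ih (by omega) i hi
    · have hmono := cmCoeff_sub_one_le hw (mem_Icc.mpr ⟨by omega, hnr⟩) fun j hj =>
        zero_le_one.trans (ih (by omega) j (by simp only [mem_Ico] at hj; omega))
      rw [add_sub_cancel_right] at hmono
      exact (ih (by omega) n le_rfl).trans hmono

lemma cmCoeff_le_sum (hs : s ∈ Icc 1 r) : cmCoeff w s ≤ ∑ i ∈ Ico 0 s, cmCoeff w i := by
  rw [cmCoeff_of_pos (by simp only [mem_Icc] at hs; omega)]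
  refine sum_le_sum fun i hi => ?_
  have hci : 0 ≤ cmCoeff w i :=
    zero_le_one.trans (one_le_cmCoeff hw (by simp only [mem_Icc, mem_Ico] at hs hi; omega))
  nlinarith [(hw s hs).2 i hi]

lemma changeMaker_cmCoeff (hr : 1 ≤ r) : ChangeMaker r (cmCoeff w) := by
  have h1 : cmCoeff w 1 = 1 := by
    have hw1 := (hw 1 (mem_Icc.mpr ⟨le_rfl, hr⟩)).1
    rw [sub_self] at hw1
    rw [cmCoeff_of_pos one_pos, show Ico (0 : ℤ) 1 = {0} by ext; simp; omega, sum_singleton, hw1,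
      cmCoeff_of_nonpos le_rfl, mul_one]
  refine ⟨by rw [h1]; norm_num, h1.le, fun i hi hir => ⟨?_, ?_⟩⟩
  · exact cmCoeff_sub_one_le hw (mem_Icc.mpr ⟨by omega, hir⟩) fun j hj =>
      zero_le_one.trans (one_le_cmCoeff hw (by simp only [mem_Ico] at hj; omega))
  · have hIco : Ico 0 i = insert 0 (Icc 1 (i - 1)) := by
      ext j; simp only [mem_Ico, mem_Icc, mem_insert]; omega
    have := cmCoeff_le_sum hw (mem_Icc.mpr ⟨by omega, hir⟩)
    rwa [hIco, sum_insert (by simp), cmCoeff_of_nonpos le_rfl, add_comm] at this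

end CmCoeff

lemma exists_negStdAddSum_eq {s : ℤ} {A : Finset ℤ} (hs : 1 ≤ s) (hA : A ⊆ Icc (-1) (s - 2)) :
    ∃ B ⊆ Icc (-1) (s - 1), s - 1 ∈ B ∧
      (fun i => -(stdE s i) + stdE (s - 1) i + ∑ j ∈ A, stdE j i) = negStdAddSum s B := by
  have hnot : s - 1 ∉ A := fun h => by have := mem_Icc.mp (hA h); omega
  refine ⟨insert (s - 1) A, insert_subset (by simp; omega)
    (hA.trans (Icc_subset_Icc le_rfl (by omega))), mem_insert_self _ _, funext fun i => ?_⟩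
  rw [negStdAddSum, sum_insert hnot, add_assoc]

/-- Let `w 1, …, w r` be vectors of the form
`w s = −e_s + e_{s−1} + ∑_{i∈A_s} e_i` with `A_s ⊆ {−1, 0, 1, …, s−2}`, each
satisfying `w_s·e₋₁ = w_s·e₀`.  Then there are integers `σ'ᵢ ≥ 1` satisfying
the change-maker condition such that the `ℤ`-span of `{w 1, …, w r}` is
exactly the associated change-maker lattice; in particular this span is an
indecomposable change-maker lattice. -/
theorem stmt10 (r : ℤ) (hr : 1 ≤ r) (w : ℤ → (ℤ → ℤ))
    (hw : ∀ s, 1 ≤ s → s ≤ r →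
      (∃ A ⊆ Finset.Icc (-1 : ℤ) (s - 2),
        w s = fun i => -(stdE s i) + stdE (s - 1) i + ∑ j ∈ A, stdE j i) ∧
      w s (-1) = w s 0) :
    ∃ σ' : ℤ → ℤ, (∀ i, 1 ≤ i → i ≤ r → 1 ≤ σ' i) ∧ ChangeMaker r σ' ∧
      (∀ x : ℤ → ℤ,
        (∃ c : ℤ → ℤ, x = fun i => ∑ s ∈ Finset.Icc (1 : ℤ) r, c s * w s i) ↔
          memCM r σ' x) ∧
      IndecompCM r {x | memCM r σ' x} := by
  have hshape : ∀ s ∈ Icc 1 r, ∃ B ⊆ Icc (-1) (s - 1), s - 1 ∈ B ∧ w s = negStdAddSum s B :=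
    fun s hs => by
      obtain ⟨⟨A, hA, hwA⟩, -⟩ := hw s (mem_Icc.mp hs).1 (mem_Icc.mp hs).2
      obtain ⟨B, hB, hsB, hAB⟩ := exists_negStdAddSum_eq (mem_Icc.mp hs).1 hA
      exact ⟨B, hB, hsB, hwA.trans hAB⟩
  have hstep : ∀ s ∈ Icc 1 r, w s (s - 1) = 1 ∧ ∀ i ∈ Ico 0 s, 0 ≤ w s i ∧ w s i ≤ 1 :=
    fun s hs => by
      obtain ⟨B, hB, hsB, hwB⟩ := hshape s hs
      rw [hwB, negStdAddSum_apply_of_ne (by omega), if_pos hsB]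
      refine ⟨rfl, fun i hi => ⟨negStdAddSum_nonneg B ?_, (negStdAddSum_apply_bounds s B i).2⟩⟩
      simp only [mem_Ico] at hi
      omega
  have htri : ∀ s ∈ Icc 1 r, w s s = -1 ∧ ∀ i ∉ Icc (-1) s, w s i = 0 := fun s hs => by
    obtain ⟨B, hB, -, hwB⟩ := hshape s hs
    have hs1 := (mem_Icc.mp hs).1
    rw [hwB]
    exact ⟨negStdAddSum_apply_self hB,
      fun i hi => negStdAddSum_apply_of_notMem_Icc hB (by omega) hi⟩
  have hmem : ∀ s ∈ Icc 1 r, memCM r (cmCoeff w) (w s) := fun s hs =>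
    memCM_cmCoeff hs (htri s hs).1 (htri s hs).2 (hw s (mem_Icc.mp hs).1 (mem_Icc.mp hs).2).2
  have hcm := changeMaker_cmCoeff hstep hr
  have hpos : ∀ i ∈ Icc 1 r, 1 ≤ cmCoeff w i := fun i hi =>
    one_le_cmCoeff hstep (mem_Icc.mp hi).2
  refine ⟨cmCoeff w, fun i h1 h2 => hpos i (mem_Icc.mpr ⟨h1, h2⟩), hcm, fun x => ⟨?_, ?_⟩,
    indecompCM_of_changeMaker hr hcm hpos⟩
  · exact memCM_of_inIntSpan hmem
  · exact inIntSpan_of_triangular (by omega) fun s hs => ⟨hmem s hs, (htri s hs).1,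
      fun i hi => (htri s hs).2 i (by simp only [mem_Icc]; omega)⟩
end

section
/- Suppose σ_i ≥ 1 for all 1 ≤ i ≤ r. If v ∈ L has the form v = −e_k + Σ_{i∈A} e_i for some 1 ≤ k ≤ r and some subset A ⊆ {−1, 0, 1, …, k−1}, then v is irreducible. -/
open Finset

/-! If `v = x + y` with `x · y ≥ 0`, then, the coordinates of `v` lying in `{-1, 0, 1}`, every
product `x i * y i` is `≤ 0`, so all of them vanish: `x` and `y` have disjoint supports. The only
negative coordinate `k` of `v` is missed by one of them, say `x`, which is therefore nonnegative.
But a nonnegative vector of `L` is zero: pairing with `σ`, which is positive on `0, …, r`, kills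
those coordinates, and then pairing with `ρ` kills the coordinate `-1`. -/

theorem Int.mul_nonpos_of_abs_add_le_one {a b : ℤ} (h : |a + b| ≤ 1) : a * b ≤ 0 := by
  by_contra! hab
  have := abs_le.mp h
  rcases mul_pos_iff.mp hab with ⟨ha, hb⟩ | ⟨ha, hb⟩ <;> omega

theorem Pi.nonneg_of_mul_eq_zero_of_add_nonneg {a b : ℤ → ℤ} {k : ℤ} (hab : ∀ i, a i * b i = 0)
    (hadd : ∀ i, i ≠ k → 0 ≤ a i + b i) (hak : a k = 0) : 0 ≤ a := by
  intro i
  by_cases hik : i = k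
  · rw [hik, hak, Pi.zero_apply]
  · rcases mul_eq_zero.mp (hab i) with h | h
    · rw [h, Pi.zero_apply]
    · simpa [h] using hadd i hik

section ChangeMakerLattice

variable {r : ℤ} {σ : ℤ → ℤ}

theorem sigmaVec_pos (hpos : ∀ i, 1 ≤ i → i ≤ r → 1 ≤ σ i) {i : ℤ} (hi0 : 0 ≤ i) (hir : i ≤ r) :
    0 < sigmaVec r σ i := by
  unfold sigmaVec
  split_ifs with h0 h1
  · exact one_pos
  · exact hpos i h1.1 h1.2
  · omega

theorem sigmaVec_nonneg (hpos : ∀ i, 1 ≤ i → i ≤ r → 1 ≤ σ i) : 0 ≤ sigmaVec r σ := by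
  intro i
  by_cases hi : 0 ≤ i ∧ i ≤ r
  · exact (sigmaVec_pos hpos hi.1 hi.2).le
  · simp only [Pi.zero_apply, sigmaVec]
    split_ifs <;> omega

theorem memCM.eq_zero_of_nonneg_s11 (hpos : ∀ i, 1 ≤ i → i ≤ r → 1 ≤ σ i) {y : ℤ → ℤ}
    (hy : memCM r σ y) (hnn : 0 ≤ y) : y = 0 := by
  obtain ⟨hsupp, hσ, hρ⟩ := hy
  have hterms := (sum_eq_zero_iff_of_nonneg fun i _ =>
    mul_nonneg (hnn i) (sigmaVec_nonneg hpos i)).mp hσ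
  have hoff : ∀ i, i ≠ -1 → y i = 0 := by
    intro i hi
    by_cases hmem : i ∈ Icc (-1) r
    · have hi0 : 0 ≤ i ∧ i ≤ r := by rw [mem_Icc] at hmem; omega
      exact (mul_eq_zero.mp (hterms i hmem)).resolve_right
        (sigmaVec_pos hpos hi0.1 hi0.2).ne'
    · exact hsupp i hmem
  have hneg : y (-1) = 0 := by
    have hρ' : ip r y rhoVec = y (-1) * rhoVec (-1) :=
      sum_eq_single (-1) (fun i _ hi => by rw [hoff i hi, zero_mul])
        (fun h => by rw [hsupp _ h, zero_mul])
    simpa [hρ', rhoVec, stdE] using hρ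
  funext i
  by_cases hi : i = -1
  · rw [hi, hneg, Pi.zero_apply]
  · exact hoff i hi

theorem memCM.mul_eq_zero_of_ip_nonneg {x y : ℤ → ℤ} (hx : memCM r σ x)
    (hxy : ∀ i, |x i + y i| ≤ 1) (hip : 0 ≤ ip r x y) (i : ℤ) : x i * y i = 0 := by
  have hle : ∀ i ∈ Icc (-1) r, x i * y i ≤ 0 :=
    fun i _ => Int.mul_nonpos_of_abs_add_le_one (hxy i)
  by_cases hi : i ∈ Icc (-1) r
  · exact (sum_eq_zero_iff_of_nonpos hle).mp (le_antisymm (sum_nonpos hle) hip) i hi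
  · rw [hx.1 i hi, zero_mul]

theorem irredCM_of_abs_le_one_of_nonneg_of_ne (hpos : ∀ i, 1 ≤ i → i ≤ r → 1 ≤ σ i)
    {v : ℤ → ℤ} {k : ℤ} (hv : ∀ i, |v i| ≤ 1) (hvk : ∀ i, i ≠ k → 0 ≤ v i) :
    IrredCM r σ v := by
  rintro ⟨x, y, hx, hy, hx0, hy0, rfl, hip⟩
  have hxy := hx.mul_eq_zero_of_ip_nonneg hv hip
  rcases mul_eq_zero.mp (hxy k) with hxk | hyk
  · exact hx0 (hx.eq_zero_of_nonneg_s11 hpos (Pi.nonneg_of_mul_eq_zero_of_add_nonneg hxy hvk hxk))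
  · exact hy0 (hy.eq_zero_of_nonneg_s11 hpos (Pi.nonneg_of_mul_eq_zero_of_add_nonneg
      (fun i => by rw [mul_comm, hxy i]) (fun i hi => by rw [add_comm]; exact hvk i hi) hyk))

end ChangeMakerLattice

theorem stmt11_general (r : ℤ) (σ : ℤ → ℤ)
    (hpos : ∀ i, 1 ≤ i → i ≤ r → 1 ≤ σ i)
    (k : ℤ)
    (A : Finset ℤ) (hA : A ⊆ Finset.Icc (-1) (k - 1))
    (v : ℤ → ℤ) (hv : v = fun i => -(stdE k i) + ∑ j ∈ A, stdE j i) :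
    IrredCM r σ v := by
  have hkA : k ∉ A := fun h => by have := mem_Icc.mp (hA h); omega
  have hvi : ∀ i, v i = (if i ∈ A then 1 else 0) - if i = k then 1 else 0 := by
    intro i
    simp only [hv, stdE, sum_ite_eq]
    ring
  refine irredCM_of_abs_le_one_of_nonneg_of_ne hpos (k := k) (fun i => ?_) (fun i hik => ?_)
  · rw [hvi]
    split_ifs <;> simp_all
  · rw [hvi, if_neg hik]
    split_ifs <;> norm_num

/-- Suppose `σᵢ ≥ 1` for all `1 ≤ i ≤ r`.  If `v ∈ L` has the form
`v = −e_k + ∑_{i∈A} e_i` with `1 ≤ k ≤ r` and `A ⊆ {−1, 0, 1, …, k−1}`,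
then `v` is irreducible. -/
theorem stmt11 (r : ℤ) (hr : 1 ≤ r) (σ : ℤ → ℤ) (hcm : ChangeMaker r σ)
    (hpos : ∀ i, 1 ≤ i → i ≤ r → 1 ≤ σ i)
    (k : ℤ) (hk1 : 1 ≤ k) (hkr : k ≤ r)
    (A : Finset ℤ) (hA : A ⊆ Finset.Icc (-1) (k - 1))
    (v : ℤ → ℤ) (hv : v = fun i => -(stdE k i) + ∑ j ∈ A, stdE j i)
    (hvL : memCM r σ v) :
    IrredCM r σ v :=
  stmt11_general r σ hpos k A hA v hv
end

section
/- Let m ≥ 1 and let d_{−1}, d_0, d_1, …, d_m be integers satisfying d_{−1} ≥ 1, d_0 − 2d_{−1} = 1, d_k = 5d_{k−1} − 4d_{k−2} for all 1 ≤ k ≤ m−1, and d_m = 3d_{m−1} − 4d_{m−2}. Then d_k > 2d_{k−1} > 1 for all 0 ≤ k ≤ m−1, and d_m > 2d_{m−2} > 1; in particular, d_m > 1. -/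
/-- Let `d₋₁, d₀, …, d_m` be integers with `d₋₁ ≥ 1`, `d₀ − 2d₋₁ = 1`,
`d_k = 5d_{k−1} − 4d_{k−2}` for `1 ≤ k ≤ m−1`, and
`d_m = 3d_{m−1} − 4d_{m−2}`.  Then `d_k > 2d_{k−1} > 1` for `0 ≤ k ≤ m−1`,
and `d_m > 2d_{m−2} > 1`; in particular `d_m > 1`. -/
theorem stmt16 (m : ℤ) (hm : 1 ≤ m) (d : ℤ → ℤ)
    (hstart : 1 ≤ d (-1)) (hd0 : d 0 - 2 * d (-1) = 1)
    (hrec : ∀ k, 1 ≤ k → k ≤ m - 1 → d k = 5 * d (k - 1) - 4 * d (k - 2))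
    (hlast : d m = 3 * d (m - 1) - 4 * d (m - 2)) :
    (∀ k, 0 ≤ k → k ≤ m - 1 → 2 * d (k - 1) < d k ∧ 1 < 2 * d (k - 1)) ∧
    (2 * d (m - 2) < d m ∧ 1 < 2 * d (m - 2)) ∧ 1 < d m := by
  have Qn : ∀ n : ℕ, (n : ℤ) ≤ m - 1 →
      2 * d ((n : ℤ) - 1) + 1 ≤ d (n : ℤ) ∧ 1 ≤ d ((n : ℤ) - 1) := by
    intro n
    induction n with
    | zero =>
      intro _
      refine ⟨by norm_num; linarith, by norm_num; exact hstart⟩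
    | succ n ih =>
      intro hk1
      push_cast at hk1 ⊢
      have hkm : (n : ℤ) ≤ m - 1 := by linarith
      obtain ⟨h1, h2⟩ := ih hkm
      have hr := hrec ((n : ℤ) + 1) (by linarith [Int.ofNat_nonneg n]) (by linarith)
      have e1 : (n : ℤ) + 1 - 1 = (n : ℤ) := by ring
      have e2 : (n : ℤ) + 1 - 2 = (n : ℤ) - 1 := by ring
      rw [e1, e2] at hr
      rw [e1]
      exact ⟨by linarith, by linarith⟩
  have Q : ∀ k : ℤ, 0 ≤ k → k ≤ m - 1 → 2 * d (k - 1) + 1 ≤ d k ∧ 1 ≤ d (k - 1) := by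
    intro k hk0 hk1
    have : ((k.toNat : ℤ)) = k := Int.toNat_of_nonneg hk0
    have := Qn k.toNat (by rw [this]; exact hk1)
    rwa [Int.toNat_of_nonneg hk0] at this
  refine ⟨fun k hk0 hk1 => ?_, ?_, ?_⟩
  · obtain ⟨h1, h2⟩ := Q k hk0 hk1
    exact ⟨by linarith, by linarith⟩
  · obtain ⟨h1, h2⟩ := Q (m - 1) (by linarith) (by linarith)
    have e : m - 1 - 1 = m - 2 := by ring
    rw [e] at h1 h2
    exact ⟨by linarith, by linarith⟩
  · obtain ⟨h1, h2⟩ := Q (m - 1) (by linarith) (by linarith)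
    have e : m - 1 - 1 = m - 2 := by ring
    rw [e] at h1 h2
    linarith
end
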